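/- arXiv:0911.4429 — 10 statements merged into one kernel-verified Lean document; each statement's English description precedes it below -/
import Mathlib

section
/- Let n ≥ 2, p ≥ 2, and let A₁, …, A_p ∈ GL_n(ℂ) be such that for all i < j the matrix A_i·A_j⁻¹ is a pseudo-reflection. Then there exists P ∈ GL_n(ℂ) such that either the matrices P·A_i·P⁻¹ all have the same first n−1 columns, or they all have the same first n−1 rows. -/
/-!
Since `A i * (A j)⁻¹ - 1 = (A i - A j) * (A j)⁻¹`, every difference `A i - A j` with `i ≠ j` has
rank one. Fix `i₀` and write `A i - A i₀ = u i ⬝ (v i)ᵀ`. If both `[u i] ≠ [u j]` and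
`[v i] ≠ [v j]` as points of projective space, then `u i ⬝ (v i)ᵀ - u j ⬝ (v j)ᵀ` has rank two;
so each pair of indices agrees in its `u`-point or in its `v`-point, and then all `u`-points or
all `v`-points agree. In the first case every difference has its image in one line `K ∙ u`, and
conjugating by some `P` with `P u = e_{n-1}` makes all rows but the last coincide. The second
case is the transposed one.
-/

open Matrix Projectivization

theorem forall_eq_or_forall_eq_of_pairwise {ι α β : Type*} {f : ι → α} {g : ι → β}
    (h : Pairwise fun i j => f i = f j ∨ g i = g j) : (∀ i j, f i = f j) ∨ ∀ i j, g i = g j := by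
  refine or_iff_not_imp_right.2 fun hg => ?_
  obtain ⟨c, d, hcd⟩ : ∃ c d, g c ≠ g d := by simpa using hg
  have hfcd : f c = f d := (h (ne_of_apply_ne g hcd)).resolve_right hcd
  have hf : ∀ i, f i = f c := by
    intro i
    by_cases hic : g i = g c
    · have hid : g i ≠ g d := hic ▸ hcd
      exact ((h (ne_of_apply_ne g hid)).resolve_right hid).trans hfcd.symm
    · exact (h (ne_of_apply_ne g hic)).resolve_right hic
  exact fun i j => (hf i).trans (hf j).symm

theorem Projectivization.linearIndependent_pair_of_mk_ne {K V : Type*} [DivisionRing K]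
    [AddCommGroup V] [Module K V] {x y : V} (hx : x ≠ 0) (hy : y ≠ 0)
    (h : mk K x hx ≠ mk K y hy) : LinearIndependent K ![x, y] := by
  rw [LinearIndependent.pair_iff' hx]
  rintro a rfl
  exact h ((mk_eq_mk_iff' K _ _ hy hx).2 ⟨a, rfl⟩).symm

namespace Matrix

section CommRing

variable {R : Type*} [CommRing R] {m n : Type*} [Fintype n]

theorem rank_neg (A : Matrix m n R) : (-A).rank = A.rank := by
  simpa using rank_smul_of_mem_nonZeroDivisors A isUnit_one.neg.mem_nonZeroDivisors

theorem rank_mul_inv_sub_one [DecidableEq n] {A B : Matrix n n R} (hB : IsUnit B) :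
    (A * B⁻¹ - 1).rank = (A - B).rank := by
  have hB' : IsUnit B.det := (isUnit_iff_isUnit_det B).1 hB
  rw [← rank_mul_eq_left_of_isUnit_det B⁻¹ (A - B) (isUnit_nonsing_inv_det B hB'), sub_mul,
    mul_nonsing_inv B hB']

end CommRing

variable {K : Type*} [Field K] {l m n : Type*}

theorem forall_exists_sub_eq_vecMulVec_of_mk_eq {ι : Type*} {A : ι → Matrix m n K} {i₀ : ι}
    {u : {i // i ≠ i₀} → m → K} {v : {i // i ≠ i₀} → n → K} (hu : ∀ i, u i ≠ 0)
    (huv : ∀ i : {i // i ≠ i₀}, A i - A i₀ = vecMulVec (u i) (v i))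
    (h : ∀ i j, mk K (u i) (hu i) = mk K (u j) (hu j)) (i₁ : {i // i ≠ i₀}) :
    ∀ i j, ∃ w, A i - A j = vecMulVec (u i₁) w := by
  have hbase : ∀ i, ∃ w, A i - A i₀ = vecMulVec (u i₁) w := by
    intro i
    by_cases hi : i = i₀
    · exact ⟨0, by ext; simp [hi, vecMulVec_apply]⟩
    · obtain ⟨a, ha⟩ := (mk_eq_mk_iff' K _ _ _ _).1 (h ⟨i, hi⟩ i₁)
      exact ⟨a • v ⟨i, hi⟩, by rw [huv ⟨i, hi⟩, ← ha, smul_vecMulVec, vecMulVec_smul]⟩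
  intro i j
  obtain ⟨wi, hwi⟩ := hbase i
  obtain ⟨wj, hwj⟩ := hbase j
  exact ⟨wi - wj, by rw [vecMulVec_sub, ← hwi, ← hwj, sub_sub_sub_cancel_right]⟩

variable [Fintype n]

theorem exists_eq_vecMulVec_of_rank_eq_one [DecidableEq n] {M : Matrix m n K}
    (hM : M.rank = 1) : ∃ u v, u ≠ 0 ∧ v ≠ 0 ∧ M = vecMulVec u v := by
  have hM' : Module.finrank K (LinearMap.range M.mulVecLin) ≤ 1 := hM.le
  obtain ⟨⟨u, _⟩, hu⟩ := finrank_le_one_iff.1 hM'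
  choose v hv using fun j => hu ⟨M.col j, Pi.single j 1, by simp⟩
  have hMuv : M = vecMulVec u v := by
    ext i j
    simpa [vecMulVec_apply, mul_comm] using (congr_fun (congr_arg Subtype.val (hv j)) i).symm
  have hM0 : M ≠ 0 := by
    rintro rfl
    simp at hM
  refine ⟨u, v, ?_, ?_, hMuv⟩ <;> rintro rfl <;> exact hM0 (hMuv ▸ by ext; simp [vecMulVec_apply])

theorem rank_mul_eq_left_of_rank_eq_card [Fintype m] (A : Matrix l m K) {B : Matrix m n K}
    (hB : B.rank = Fintype.card m) : (A * B).rank = A.rank := by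
  have hB' : LinearMap.range B.mulVecLin = ⊤ :=
    Submodule.eq_top_of_finrank_eq (by rw [← rank, hB, Module.finrank_fintype_fun_eq_card])
  rw [rank, rank, mulVecLin_mul, LinearMap.range_comp_of_range_eq_top _ hB']

theorem rank_vecMulVec_sub_vecMulVec [Fintype m] {u₁ u₂ : m → K} {v₁ v₂ : n → K}
    (hu : LinearIndependent K ![u₁, u₂]) (hv : LinearIndependent K ![v₁, v₂]) :
    (vecMulVec u₁ v₁ - vecMulVec u₂ v₂).rank = 2 := by
  have hv' : LinearIndependent K (of ![v₁, -v₂]).row := by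
    convert hv.units_smul ![1, -1] using 1
    ext i : 1
    fin_cases i <;> simp
  have hfac : vecMulVec u₁ v₁ - vecMulVec u₂ v₂ = (of ![u₁, u₂])ᵀ * of ![v₁, -v₂] := by
    ext i j
    simp [mul_apply, Fin.sum_univ_two, vecMulVec_apply, sub_eq_add_neg]
  rw [hfac, rank_mul_eq_left_of_rank_eq_card _ hv'.rank_matrix, rank_transpose,
    LinearIndependent.rank_matrix (M := of ![u₁, u₂]) hu, Fintype.card_fin]

theorem mk_eq_or_mk_eq_of_rank_vecMulVec_sub_le_one [Fintype m] {u₁ u₂ : m → K} {v₁ v₂ : n → K}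
    (hu₁ : u₁ ≠ 0) (hu₂ : u₂ ≠ 0) (hv₁ : v₁ ≠ 0) (hv₂ : v₂ ≠ 0)
    (h : (vecMulVec u₁ v₁ - vecMulVec u₂ v₂).rank ≤ 1) :
    mk K u₁ hu₁ = mk K u₂ hu₂ ∨ mk K v₁ hv₁ = mk K v₂ hv₂ := by
  by_contra! hne
  have := rank_vecMulVec_sub_vecMulVec (linearIndependent_pair_of_mk_ne _ _ hne.1)
    (linearIndependent_pair_of_mk_ne _ _ hne.2)
  omega

theorem exists_isUnit_mulVec_eq_single [DecidableEq n] {u : n → K} (hu : u ≠ 0) (l : n) :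
    ∃ P : Matrix n n K, IsUnit P ∧ P *ᵥ u = Pi.single l 1 := by
  have hl : (Pi.single l 1 : n → K) ≠ 0 := by simp
  obtain ⟨g, hg⟩ := (MulAction.isPretransitive_of_is_two_pretransitive
    (G := LinearMap.GeneralLinearGroup K (n → K))).exists_smul_eq (mk K u hu) (mk K _ hl)
  obtain ⟨a, ha : a • Pi.single l 1 = g • u⟩ := (mk_eq_mk_iff' K _ _ _ hl).1 hg
  have ha0 : a ≠ 0 := by
    rintro rfl
    exact hu ((smul_eq_zero_iff_eq g).1 (by simpa using ha.symm))
  refine ⟨(Units.mk0 a ha0)⁻¹ • LinearMap.toMatrix' g,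
    (LinearMap.isUnit_toMatrix'_iff.2 g.isUnit).smul _, ?_⟩
  rw [Units.smul_def, smul_mulVec, LinearMap.toMatrix'_mulVec]
  change _ • g • u = _
  rw [← ha]
  simp [ha0]

theorem exists_sub_eq_vecMulVec_of_pairwise_rank_sub_eq_one [Fintype m] [DecidableEq n]
    {ι : Type*} [Nontrivial ι] {A : ι → Matrix m n K}
    (hA : Pairwise fun i j => (A i - A j).rank = 1) :
    (∃ u ≠ 0, ∀ i j, ∃ w, A i - A j = vecMulVec u w) ∨
      ∃ v ≠ 0, ∀ i j, ∃ w, A i - A j = vecMulVec w v := by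
  obtain ⟨i₀⟩ := (inferInstance : Nonempty ι)
  obtain ⟨i₁, hi₁⟩ := exists_ne i₀
  choose u v hu hv huv using fun i : {i // i ≠ i₀} => exists_eq_vecMulVec_of_rank_eq_one (hA i.2)
  have hpair : Pairwise fun i j : {i // i ≠ i₀} =>
      mk K (u i) (hu i) = mk K (u j) (hu j) ∨ mk K (v i) (hv i) = mk K (v j) (hv j) := by
    intro i j hij
    apply mk_eq_or_mk_eq_of_rank_vecMulVec_sub_le_one
    rw [← huv, ← huv, sub_sub_sub_cancel_right]
    exact (hA (Subtype.coe_injective.ne hij)).le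
  rcases forall_eq_or_forall_eq_of_pairwise hpair with hu' | hv'
  · exact .inl ⟨u ⟨i₁, hi₁⟩, hu _, forall_exists_sub_eq_vecMulVec_of_mk_eq hu huv hu' _⟩
  · refine .inr ⟨v ⟨i₁, hi₁⟩, hv _, fun i j => ?_⟩
    obtain ⟨w, hw⟩ := forall_exists_sub_eq_vecMulVec_of_mk_eq (A := fun i => (A i)ᵀ) hv
      (fun i => by rw [← transpose_sub, huv, transpose_vecMulVec]) hv' ⟨i₁, hi₁⟩ i j
    exact ⟨w, by rw [← transpose_transpose (A i - A j), transpose_sub, hw, transpose_vecMulVec]⟩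

theorem exists_conj_rows_eq_of_sub_eq_vecMulVec [DecidableEq n] {ι : Type*}
    {A : ι → Matrix n n K} {u : n → K} (hu : u ≠ 0) (h : ∀ i j, ∃ w, A i - A j = vecMulVec u w)
    (l : n) : ∃ P : Matrix n n K, IsUnit P ∧
      ∀ i j, ∀ k ≠ l, ∀ r, (P * A i * P⁻¹) k r = (P * A j * P⁻¹) k r := by
  obtain ⟨P, hP, hPu⟩ := exists_isUnit_mulVec_eq_single hu l
  refine ⟨P, hP, fun i j k hk r => ?_⟩
  obtain ⟨w, hw⟩ := h i j
  have hconj : P * A i * P⁻¹ - P * A j * P⁻¹ = vecMulVec (Pi.single l 1) (w ᵥ* P⁻¹) := by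
    rw [← sub_mul, ← mul_sub, hw, mul_vecMulVec, vecMulVec_mul, hPu]
  simpa [vecMulVec_apply, hk, sub_eq_zero] using congr_fun₂ hconj k r

theorem exists_conj_cols_eq_of_sub_eq_vecMulVec [DecidableEq n] {ι : Type*}
    {A : ι → Matrix n n K} {v : n → K} (hv : v ≠ 0) (h : ∀ i j, ∃ w, A i - A j = vecMulVec w v)
    (l : n) : ∃ P : Matrix n n K, IsUnit P ∧
      ∀ i j, ∀ k ≠ l, ∀ r, (P * A i * P⁻¹) r k = (P * A j * P⁻¹) r k := by
  obtain ⟨Q, hQ, hQv⟩ := exists_isUnit_mulVec_eq_single hv l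
  have hQ' : IsUnit Qᵀ.det := by rwa [det_transpose, ← isUnit_iff_isUnit_det]
  refine ⟨Qᵀ⁻¹, isUnit_nonsing_inv_iff.2 ((isUnit_transpose Q).2 hQ), fun i j k hk r => ?_⟩
  obtain ⟨w, hw⟩ := h i j
  have hconj : Qᵀ⁻¹ * A i * Qᵀ⁻¹⁻¹ - Qᵀ⁻¹ * A j * Qᵀ⁻¹⁻¹ =
      vecMulVec (Qᵀ⁻¹ *ᵥ w) (Pi.single l 1) := by
    rw [← sub_mul, ← mul_sub, hw, mul_vecMulVec, vecMulVec_mul, nonsing_inv_nonsing_inv _ hQ',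
      vecMul_transpose, hQv]
  simpa [vecMulVec_apply, hk, sub_eq_zero] using congr_fun₂ hconj r k

end Matrix

theorem stmt_2 (n p : ℕ) (hn : 2 ≤ n) (hp : 2 ≤ p) (A : Fin p → Matrix (Fin n) (Fin n) ℂ)
    (hA : ∀ i, IsUnit (A i))
    (hpr : ∀ i j : Fin p, i < j → (A i * (A j)⁻¹ - 1).rank = 1) :
    ∃ P : Matrix (Fin n) (Fin n) ℂ, IsUnit P ∧
      ((∀ i j : Fin p, ∀ k : Fin n, (k : ℕ) < n - 1 → ∀ r : Fin n,
          (P * A i * P⁻¹) r k = (P * A j * P⁻¹) r k) ∨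
       (∀ i j : Fin p, ∀ k : Fin n, (k : ℕ) < n - 1 → ∀ r : Fin n,
          (P * A i * P⁻¹) k r = (P * A j * P⁻¹) k r)) := by
  have : Nontrivial (Fin p) := Fin.nontrivial_iff_two_le.2 hp
  have hrank : Pairwise fun i j => (A i - A j).rank = 1 := by
    intro i j hij
    rcases hij.lt_or_gt with h | h
    · rw [← rank_mul_inv_sub_one (hA j)]
      exact hpr i j h
    · rw [← neg_sub, rank_neg, ← rank_mul_inv_sub_one (hA i)]
      exact hpr j i h
  let l : Fin n := ⟨n - 1, by omega⟩
  have hl : ∀ k : Fin n, (k : ℕ) < n - 1 → k ≠ l := fun k hk hkl => by simp [hkl, l] at hk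
  rcases exists_sub_eq_vecMulVec_of_pairwise_rank_sub_eq_one hrank with ⟨u, hu, h⟩ | ⟨v, hv, h⟩
  · obtain ⟨P, hP, hrows⟩ := exists_conj_rows_eq_of_sub_eq_vecMulVec hu h l
    exact ⟨P, hP, .inr fun i j k hk => hrows i j k (hl k hk)⟩
  · obtain ⟨P, hP, hcols⟩ := exists_conj_cols_eq_of_sub_eq_vecMulVec hv h l
    exact ⟨P, hP, .inl fun i j k hk => hcols i j k (hl k hk)⟩
end

section
/- Let n ≥ 2 and let A, B ∈ GL_n(ℂ) with rank(A − B) = 1, and suppose A and B share a common eigenvalue λ ∈ ℂ. Then A and B stabilize a common line or a common hyperplane of ℂⁿ; in particular the group generated by A and B acts reducibly on ℂⁿ. -/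
open Matrix LinearMap

theorem exists_eig (n : ℕ) (A : Matrix (Fin n) (Fin n) ℂ) (lam : ℂ) (h : lam ∈ spectrum ℂ A) :
    ∃ v : Fin n → ℂ, v ≠ 0 ∧ A.mulVec v = lam • v := by
  rw [spectrum.mem_iff] at h
  rw [Matrix.isUnit_iff_isUnit_det, isUnit_iff_ne_zero, not_not] at h
  obtain ⟨v, hv0, hv⟩ := (Matrix.exists_mulVec_eq_zero_iff).2 h
  refine ⟨v, hv0, ?_⟩
  rw [Matrix.sub_mulVec, sub_eq_zero, Algebra.algebraMap_eq_smul_one,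
    Matrix.smul_mulVec, Matrix.one_mulVec] at hv
  exact hv.symm

theorem range_le (n : ℕ) (A B : Matrix (Fin n) (Fin n) ℂ)
    (hrk : (A - B).rank = 1) (lam : ℂ)
    (hno : ∀ v : Fin n → ℂ, A.mulVec v = lam • v → B.mulVec v = lam • v → v = 0)
    (vB : Fin n → ℂ) (hvB0 : vB ≠ 0) (hvB : B.mulVec vB = lam • vB) :
    LinearMap.range (B - lam • 1).mulVecLin ≤ LinearMap.range (A - lam • 1).mulVecLin := by
  intro w hw
  by_contra hwn
  obtain ⟨x, rfl⟩ := hw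
  set z := (A - B).mulVec x with hz
  have hdecomp : (A - lam • 1).mulVecLin x = (B - lam • 1).mulVecLin x + z := by
    simp only [Matrix.mulVecLin_apply, hz, Matrix.sub_mulVec]
    abel
  have hzA : z ∉ LinearMap.range (A - lam • 1).mulVecLin := by
    intro hzr
    exact hwn (by
      have : (B - lam • 1).mulVecLin x = (A - lam • 1).mulVecLin x - z := by
        rw [hdecomp]; abel
      rw [this]
      exact Submodule.sub_mem _ (LinearMap.mem_range_self _ x) hzr)
  have hz0 : z ≠ 0 := fun h => hzA (h ▸ (Submodule.zero_mem _))
  have hzR : z ∈ LinearMap.range (A - B).mulVecLin := ⟨x, rfl⟩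
  have hfr : Module.finrank ℂ (LinearMap.range (A - B).mulVecLin) = 1 := hrk
  have hspan : Submodule.span ℂ {z} = LinearMap.range (A - B).mulVecLin := by
    apply Submodule.eq_of_le_of_finrank_eq
    · rwa [Submodule.span_singleton_le_iff_mem]
    · rw [finrank_span_singleton hz0, hfr]
  have hvBmem : (A - lam • 1).mulVec vB ∈ Submodule.span ℂ {z} := by
    rw [hspan]
    refine ⟨vB, ?_⟩
    simp only [Matrix.mulVecLin_apply, Matrix.sub_mulVec, hvB,
      Matrix.smul_mulVec, Matrix.one_mulVec]
  obtain ⟨c, hc⟩ := Submodule.mem_span_singleton.1 hvBmem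
  rcases eq_or_ne c 0 with rfl | hcne
  · rw [zero_smul] at hc
    have hAvB : A.mulVec vB = lam • vB := by
      have := hc.symm
      rw [Matrix.sub_mulVec, Matrix.smul_mulVec, Matrix.one_mulVec, sub_eq_zero] at this
      exact this
    exact hvB0 (hno vB hAvB hvB)
  · apply hzA
    have : z = c⁻¹ • (A - lam • 1).mulVec vB := by
      rw [← hc, smul_smul, inv_mul_cancel₀ hcne, one_smul]
    rw [this]
    exact Submodule.smul_mem _ _ ⟨vB, rfl⟩

theorem stmt_3 (n : ℕ) (hn : 2 ≤ n) (A B : Matrix (Fin n) (Fin n) ℂ)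
    (hA : IsUnit A) (hB : IsUnit B)
    (hrk : (A - B).rank = 1) (lam : ℂ)
    (hlamA : lam ∈ spectrum ℂ A) (hlamB : lam ∈ spectrum ℂ B) :
    ∃ W : Submodule ℂ (Fin n → ℂ),
      (Module.finrank ℂ W = 1 ∨ Module.finrank ℂ W = n - 1) ∧
      (∀ x ∈ W, A.mulVec x ∈ W) ∧ (∀ x ∈ W, B.mulVec x ∈ W) ∧
      W ≠ ⊥ ∧ W ≠ ⊤ := by
  have hfrn : Module.finrank ℂ (Fin n → ℂ) = n := by simp
  by_cases hcom : ∃ v : Fin n → ℂ, v ≠ 0 ∧ A.mulVec v = lam • v ∧ B.mulVec v = lam • v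
  · obtain ⟨v, hv0, hAv, hBv⟩ := hcom
    refine ⟨Submodule.span ℂ {v}, Or.inl (finrank_span_singleton hv0), ?_, ?_, ?_, ?_⟩
    · intro x hx
      obtain ⟨c, rfl⟩ := Submodule.mem_span_singleton.1 hx
      rw [Matrix.mulVec_smul, hAv]
      exact Submodule.smul_mem _ _ (Submodule.smul_mem _ _ (Submodule.mem_span_singleton_self v))
    · intro x hx
      obtain ⟨c, rfl⟩ := Submodule.mem_span_singleton.1 hx
      rw [Matrix.mulVec_smul, hBv]
      exact Submodule.smul_mem _ _ (Submodule.smul_mem _ _ (Submodule.mem_span_singleton_self v))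
    · simpa [Submodule.span_singleton_eq_bot] using hv0
    · intro htop
      have : Module.finrank ℂ (Submodule.span ℂ {v}) = n := by
        rw [htop, finrank_top, hfrn]
      rw [finrank_span_singleton hv0] at this
      omega
  · push_neg at hcom
    have hno : ∀ v : Fin n → ℂ, A.mulVec v = lam • v → B.mulVec v = lam • v → v = 0 := by
      intro v h1 h2
      by_contra hv0
      exact (hcom v hv0 h1) h2
    have hno' : ∀ v : Fin n → ℂ, B.mulVec v = lam • v → A.mulVec v = lam • v → v = 0 :=
      fun v h1 h2 => hno v h2 h1
    obtain ⟨vA, hvA0, hvA⟩ := exists_eig n A lam hlamA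
    obtain ⟨vB, hvB0, hvB⟩ := exists_eig n B lam hlamB
    have hrk' : (B - A).rank = 1 := by
      have h1 : (B - A).mulVecLin = -((A - B).mulVecLin) := by
        ext x
        simp [Matrix.sub_mulVec]
      show Module.finrank ℂ (LinearMap.range (B - A).mulVecLin) = 1
      rw [h1, LinearMap.range_neg]
      exact hrk
    have hle1 := range_le n A B hrk lam hno vB hvB0 hvB
    have hle2 := range_le n B A hrk' lam hno' vA hvA0 hvA
    set W := LinearMap.range (A - lam • 1).mulVecLin with hW
    have hEq : LinearMap.range (B - lam • 1).mulVecLin = W := le_antisymm hle1 hle2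
    -- finrank of kernel of A - lam • 1 is 1
    set EA := LinearMap.ker (A - lam • 1).mulVecLin with hEA
    have hvAE : vA ∈ EA := by
      rw [LinearMap.mem_ker, Matrix.mulVecLin_apply, Matrix.sub_mulVec, hvA,
        Matrix.smul_mulVec, Matrix.one_mulVec, sub_self]
    have hEAne : EA ≠ ⊥ := fun h => hvA0 (by simpa [h] using hvAE)
    have hEApos : 0 < Module.finrank ℂ EA := by
      rw [pos_iff_ne_zero, Ne, Submodule.finrank_eq_zero]
      exact hEAne
    have hdisj : EA ⊓ LinearMap.ker (A - B).mulVecLin = ⊥ := by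
      rw [eq_bot_iff]
      intro x hx
      have hx1 : (A - lam • 1).mulVecLin x = 0 := hx.1
      have hx2 : (A - B).mulVecLin x = 0 := hx.2
      rw [Matrix.mulVecLin_apply, Matrix.sub_mulVec, sub_eq_zero] at hx1 hx2
      rw [Matrix.smul_mulVec, Matrix.one_mulVec] at hx1
      have hBx : B.mulVec x = lam • x := by rw [← hx2, hx1]
      simpa using hno x hx1 hBx
    have hkerAB : Module.finrank ℂ (LinearMap.ker (A - B).mulVecLin) = n - 1 := by
      have hrn := LinearMap.finrank_range_add_finrank_ker (A - B).mulVecLin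
      have hfr : Module.finrank ℂ (LinearMap.range (A - B).mulVecLin) = 1 := hrk
      rw [hfr, hfrn] at hrn
      omega
    have hsum := Submodule.finrank_sup_add_finrank_inf_eq EA (LinearMap.ker (A - B).mulVecLin)
    rw [hdisj] at hsum
    have hsumle : Module.finrank ℂ ↥(EA ⊔ LinearMap.ker (A - B).mulVecLin) ≤ n := by
      exact le_trans (Submodule.finrank_le _) (le_of_eq hfrn)
    have hEA1 : Module.finrank ℂ EA = 1 := by
      simp only [finrank_bot] at hsum
      omega
    have hWrank : Module.finrank ℂ W = n - 1 := by
      have hrn := LinearMap.finrank_range_add_finrank_ker (A - lam • 1).mulVecLin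
      rw [← hW, ← hEA, hEA1, hfrn] at hrn
      omega
    refine ⟨W, Or.inr hWrank, ?_, ?_, ?_, ?_⟩
    · intro x hx
      have h1 : (A - lam • 1).mulVec x ∈ W := ⟨x, rfl⟩
      have h2 : A.mulVec x = (A - lam • 1).mulVec x + lam • x := by
        rw [Matrix.sub_mulVec, Matrix.smul_mulVec, Matrix.one_mulVec]
        abel
      rw [h2]
      exact Submodule.add_mem _ h1 (Submodule.smul_mem _ _ hx)
    · intro x hx
      have h1 : (B - lam • 1).mulVec x ∈ W := hEq ▸ (⟨x, rfl⟩ : (B - lam • 1).mulVec x ∈ LinearMap.range (B - lam • 1).mulVecLin)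
      have h2 : B.mulVec x = (B - lam • 1).mulVec x + lam • x := by
        rw [Matrix.sub_mulVec, Matrix.smul_mulVec, Matrix.one_mulVec]
        abel
      rw [h2]
      exact Submodule.add_mem _ h1 (Submodule.smul_mem _ _ hx)
    · intro h
      rw [h, finrank_bot] at hWrank
      omega
    · intro h
      rw [h, finrank_top, hfrn] at hWrank
      omega
end

section
/- Let n, p ≥ 2 and let A₁, …, A_p ∈ M_n(ℂ) be matrices that have the same first n−1 rows (i.e. e_kᵀ A_i = e_kᵀ A_j for all i, j and all k ≤ n−1) and share a common eigenvalue λ ∈ ℂ. Then there exists a line or a hyperplane of ℂⁿ that is invariant under every A_i. -/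
/-!
Put `B i = λ - A i`; these matrices are singular and still share all rows but the last one.
If those shared rows are linearly dependent, a dependency `g` (with `g last = 0`) is a common
left null vector of all `B i`, so the hyperplane `g ⊥` is invariant. Otherwise pick `x ≠ 0`
orthogonal to the shared rows: each `B i x` is supported on the last coordinate, and pairing it
with a left null vector of `B i` (whose last entry cannot vanish) shows `B i x = 0`, so `x` spans
an invariant line.
-/

open Matrix

namespace Matrix

lemma vecMul_eq_vecMul_of_rows_eq {R m n : Type*} [NonUnitalNonAssocSemiring R] [Fintype m]
    {B C : Matrix m n R} {r : m} (hBC : ∀ k ≠ r, B k = C k) {g : m → R} (hg : g r = 0) :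
    g ᵥ* B = g ᵥ* C := by
  simp only [vecMul_eq_sum]
  refine Finset.sum_congr rfl fun k _ => ?_
  by_cases hk : k = r
  · simp [hk, hg]
  · rw [hBC k hk]

variable {K n ι : Type*} [Field K] [Fintype n] [DecidableEq n]

lemma exists_mulVec_eq_zero_off_row (M : Matrix n n K) (r : n) :
    ∃ x ≠ 0, ∀ k ≠ r, (M *ᵥ x) k = 0 := by
  have hdet : (M.updateRow r 0).det = 0 := det_eq_zero_of_row_eq_zero r fun _ => by simp
  obtain ⟨x, hx, hMx⟩ := exists_mulVec_eq_zero_iff.2 hdet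
  refine ⟨x, hx, fun k hk => ?_⟩
  simpa [mulVec, updateRow_ne hk] using congrFun hMx k

lemma exists_vecMul_or_mulVec_eq_zero_of_rows_eq (r : n) (B : ι → Matrix n n K)
    (hrows : ∀ i j, ∀ k ≠ r, B i k = B j k) (hdet : ∀ i, (B i).det = 0) :
    (∃ g ≠ 0, ∀ i, g ᵥ* B i = 0) ∨ ∃ x ≠ 0, ∀ i, B i *ᵥ x = 0 := by
  rcases isEmpty_or_nonempty ι with hι | ⟨⟨i₀⟩⟩
  · exact Or.inr ⟨Pi.single r 1, by simp, isEmptyElim⟩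
  by_cases hdep : ∃ g ≠ 0, g r = 0 ∧ g ᵥ* B i₀ = 0
  · obtain ⟨g, hg, hgr, hgB⟩ := hdep
    exact Or.inl ⟨g, hg, fun i => (vecMul_eq_vecMul_of_rows_eq (hrows i i₀) hgr).trans hgB⟩
  obtain ⟨x, hx, hBx⟩ := exists_mulVec_eq_zero_off_row (B i₀) r
  refine Or.inr ⟨x, hx, fun i => ?_⟩
  have hsingle : B i *ᵥ x = Pi.single r ((B i *ᵥ x) r) := by
    ext k
    by_cases hk : k = r
    · simp [hk]
    · rw [Pi.single_eq_of_ne hk, ← hBx k hk]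
      exact congrArg (· ⬝ᵥ x) (hrows i i₀ k hk)
  obtain ⟨g, hg, hgB⟩ := exists_vecMul_eq_zero_iff.2 (hdet i)
  have hgr : g r ≠ 0 := fun hgr =>
    hdep ⟨g, hg, hgr, (vecMul_eq_vecMul_of_rows_eq (hrows i₀ i) hgr).trans hgB⟩
  have hpair : g r * (B i *ᵥ x) r = 0 := by
    rw [← dotProduct_single, ← hsingle, dotProduct_mulVec, hgB, zero_dotProduct]
  rw [hsingle, (mul_eq_zero.1 hpair).resolve_left hgr, Pi.single_zero]

lemma det_scalar_sub_eq_zero_of_mem_spectrum {A : Matrix n n K} {μ : K} (h : μ ∈ spectrum K A) :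
    (scalar n μ - A).det = 0 := by
  rw [← eval_charpoly]
  exact mem_spectrum_iff_isRoot_charpoly.1 h

lemma finrank_ker_dotProductEquiv {g : n → K} (hg : g ≠ 0) :
    Module.finrank K (LinearMap.ker (dotProductEquiv K n g)) = Fintype.card n - 1 := by
  have h := Module.Dual.finrank_ker_add_one_of_ne_zero ((dotProductEquiv K n).map_ne_zero_iff.2 hg)
  rw [Module.finrank_fintype_fun_eq_card] at h
  omega

lemma mulVec_mem_ker_dotProductEquiv {A : Matrix n n K} {g : n → K} {μ : K}
    (hg : g ᵥ* (scalar n μ - A) = 0) {y : n → K}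
    (hy : y ∈ LinearMap.ker (dotProductEquiv K n g)) :
    A *ᵥ y ∈ LinearMap.ker (dotProductEquiv K n g) := by
  rw [vecMul_sub, sub_eq_zero, eq_comm] at hg
  simp_all [dotProduct_mulVec]

lemma mulVec_mem_span_singleton {A : Matrix n n K} {x : n → K} {μ : K}
    (hx : (scalar n μ - A) *ᵥ x = 0) {y : n → K} (hy : y ∈ K ∙ x) :
    A *ᵥ y ∈ K ∙ x := by
  rw [sub_mulVec, sub_eq_zero, eq_comm] at hx
  obtain ⟨c, rfl⟩ := Submodule.mem_span_singleton.1 hy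
  simp_all [mulVec_smul, Submodule.smul_mem, Submodule.mem_span_singleton_self]

end Matrix

theorem stmt_4_general (n p : ℕ) (hn : 2 ≤ n)
    (A : Fin p → Matrix (Fin n) (Fin n) ℂ)
    (hrows : ∀ i j : Fin p, ∀ k : Fin n, (k : ℕ) < n - 1 → ∀ c : Fin n, A i k c = A j k c)
    (lam : ℂ) (hlam : ∀ i, lam ∈ spectrum ℂ (A i)) :
    ∃ W : Submodule ℂ (Fin n → ℂ),
      (Module.finrank ℂ W = 1 ∨ Module.finrank ℂ W = n - 1) ∧
      ∀ i, ∀ x ∈ W, (A i).mulVec x ∈ W := by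
  let B i := scalar (Fin n) lam - A i
  have hrowsB : ∀ i j, ∀ k ≠ (⟨n - 1, by omega⟩ : Fin n), B i k = B j k := by
    intro i j k hk
    have hk : (k : ℕ) ≠ n - 1 := fun h => hk (Fin.ext h)
    ext c
    simp [B, hrows i j k (by omega) c]
  have hdet i : (B i).det = 0 := det_scalar_sub_eq_zero_of_mem_spectrum (hlam i)
  rcases exists_vecMul_or_mulVec_eq_zero_of_rows_eq _ B hrowsB hdet with
    ⟨g, hg, hgB⟩ | ⟨x, hx, hBx⟩
  · refine ⟨LinearMap.ker (dotProductEquiv ℂ (Fin n) g), Or.inr ?_, fun i y hy => ?_⟩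
    · simpa using finrank_ker_dotProductEquiv hg
    · exact mulVec_mem_ker_dotProductEquiv (hgB i) hy
  · exact ⟨ℂ ∙ x, Or.inl (finrank_span_singleton hx),
      fun i y hy => mulVec_mem_span_singleton (hBx i) hy⟩

theorem stmt_4 (n p : ℕ) (hn : 2 ≤ n) (hp : 2 ≤ p)
    (A : Fin p → Matrix (Fin n) (Fin n) ℂ)
    (hrows : ∀ i j : Fin p, ∀ k : Fin n, (k : ℕ) < n - 1 → ∀ c : Fin n, A i k c = A j k c)
    (lam : ℂ) (hlam : ∀ i, lam ∈ spectrum ℂ (A i)) :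
    ∃ W : Submodule ℂ (Fin n → ℂ),
      (Module.finrank ℂ W = 1 ∨ Module.finrank ℂ W = n - 1) ∧
      ∀ i, ∀ x ∈ W, (A i).mulVec x ∈ W :=
  stmt_4_general n p hn A hrows lam hlam
end

section
/- Let n, p ≥ 2 and let A₁, …, A_p ∈ M_n(ℂ) be matrices that have the same first n−1 columns (i.e. A_i e_k = A_j e_k for all i, j and all k ≤ n−1) and share a common eigenvalue λ ∈ ℂ. Then there exists a nonzero proper subspace of ℂⁿ invariant under every A_i. -/
/-!
Put `Bᵢ = Aᵢ - λ`. These singular matrices still share their first `n - 1` columns, so they agree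
on the hyperplane `H = {x | xₙ = 0}`. If their common restriction to `H` kills some `v ≠ 0`, then `v`
is a common eigenvector of the `Aᵢ`. Otherwise `B(H)` has dimension `n - 1`; it lies in the range
of every `Bᵢ`, which has dimension at most `n - 1`, so `B(H)` is the common range of the `Bᵢ` and
hence invariant under every `Aᵢ`.
-/

open Module Matrix

theorem Matrix.mulVec_eq_of_col_eq_of_ne {m n R : Type*} [Fintype n] [NonUnitalNonAssocSemiring R]
    {A B : Matrix m n R} {k : n} (hAB : ∀ r j, j ≠ k → A r j = B r j) {v : n → R}
    (hv : v k = 0) : A *ᵥ v = B *ᵥ v := by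
  funext r
  refine Finset.sum_congr rfl fun j _ => ?_
  by_cases hj : j = k
  · simp [hj, hv]
  · simp only [hAB r j hj]

theorem finrank_ker_proj_add_one {K n : Type*} [Field K] [Fintype n] (k : n) :
    finrank K (LinearMap.ker (LinearMap.proj k : (n → K) →ₗ[K] K)) + 1 = Fintype.card n := by
  have hrank := LinearMap.finrank_range_add_finrank_ker (LinearMap.proj k : (n → K) →ₗ[K] K)
  rw [LinearMap.range_eq_top.2 (LinearMap.proj_surjective k), finrank_top, finrank_self,
    finrank_fintype_fun_eq_card] at hrank
  omega

section Hyperplane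

variable {K V : Type*} [Field K] [AddCommGroup V] [Module K V]

theorem finrank_map_eq_of_injOn {f : End K V} {H : Submodule K V}
    (hf : ∀ v ∈ H, f v = 0 → v = 0) : finrank K (H.map f) = finrank K H := by
  rw [← LinearMap.range_domRestrict]
  refine LinearMap.finrank_range_of_inj ((injective_iff_map_eq_zero _).2 fun v hv => ?_)
  exact Subtype.ext (hf v v.2 hv)

variable [FiniteDimensional K V]

theorem finrank_range_lt_of_ker_ne_bot {f : End K V} (hf : LinearMap.ker f ≠ ⊥) :
    finrank K (LinearMap.range f) < finrank K V := by
  have hrank := LinearMap.finrank_range_add_finrank_ker f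
  have hker := Submodule.one_le_finrank_iff.2 hf
  omega

theorem range_eq_map_of_eqOn_hyperplane {f g : End K V} {H : Submodule K V}
    (hH : finrank K H + 1 = finrank K V) (hfg : ∀ v ∈ H, f v = g v)
    (hf : ∀ v ∈ H, f v = 0 → v = 0) (hg : LinearMap.ker g ≠ ⊥) :
    LinearMap.range g = H.map f := by
  have hle : H.map f ≤ LinearMap.range g := by
    rintro _ ⟨v, hv, rfl⟩
    exact ⟨v, (hfg v hv).symm⟩
  refine (Submodule.eq_of_le_of_finrank_le hle ?_).symm
  have hlt := finrank_range_lt_of_ker_ne_bot hg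
  rw [finrank_map_eq_of_injOn hf]
  omega

theorem exists_invariant_of_eqOn_hyperplane {ι : Type*} [Nonempty ι] (f : ι → End K V)
    (H : Submodule K V) (hV : 2 ≤ finrank K V) (hH : finrank K H + 1 = finrank K V)
    (hfH : ∀ i j, ∀ v ∈ H, f i v = f j v) (hf : ∀ i, LinearMap.ker (f i) ≠ ⊥) :
    ∃ W : Submodule K V, W ≠ ⊥ ∧ W ≠ ⊤ ∧ ∀ i, ∀ x ∈ W, f i x ∈ W := by
  obtain ⟨i₀⟩ := ‹Nonempty ι›
  by_cases hinj : ∀ v ∈ H, f i₀ v = 0 → v = 0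
  · have hrange (i) : LinearMap.range (f i) = H.map (f i₀) :=
      range_eq_map_of_eqOn_hyperplane hH (hfH i₀ i) hinj (hf i)
    have hW := finrank_map_eq_of_injOn hinj
    refine ⟨H.map (f i₀), fun h => ?_, fun h => ?_, fun i x _ => hrange i ▸ ⟨x, rfl⟩⟩
    · rw [h, finrank_bot] at hW
      omega
    · rw [h, finrank_top] at hW
      omega
  · push Not at hinj
    obtain ⟨v, hvH, hv, hv0⟩ := hinj
    refine ⟨K ∙ v, by simpa using hv0, fun h => ?_, fun i x hx => ?_⟩
    · have hline := finrank_span_singleton (K := K) hv0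
      rw [h, finrank_top] at hline
      omega
    · obtain ⟨c, rfl⟩ := Submodule.mem_span_singleton.1 hx
      rw [map_smul, ← hfH i₀ i v hvH, hv, smul_zero]
      exact zero_mem _

end Hyperplane

theorem Matrix.ker_toLin'_sub_ne_bot_of_mem_spectrum {K n : Type*} [Field K] [Fintype n]
    [DecidableEq n] {A : Matrix n n K} {μ : K} (h : μ ∈ spectrum K A) :
    LinearMap.ker (toLin' A - μ • 1) ≠ ⊥ := by
  rw [← Module.End.eigenspace_def]
  exact Module.End.hasEigenvalue_iff_mem_spectrum.2 (by rwa [spectrum_toLin'])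

theorem stmt_5 (n p : ℕ) (hn : 2 ≤ n) (hp : 2 ≤ p)
    (A : Fin p → Matrix (Fin n) (Fin n) ℂ)
    (hcols : ∀ i j : Fin p, ∀ k : Fin n, (k : ℕ) < n - 1 → ∀ r : Fin n, A i r k = A j r k)
    (lam : ℂ) (hlam : ∀ i, lam ∈ spectrum ℂ (A i)) :
    ∃ W : Submodule ℂ (Fin n → ℂ), W ≠ ⊥ ∧ W ≠ ⊤ ∧
      ∀ i, ∀ x ∈ W, (A i).mulVec x ∈ W := by
  have : Nonempty (Fin p) := ⟨⟨0, by omega⟩⟩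
  let last : Fin n := ⟨n - 1, by omega⟩
  have hagree (i j : Fin p) (v : Fin n → ℂ) (hv : v ∈ LinearMap.ker (LinearMap.proj (R := ℂ) last)) :
      (toLin' (A i) - lam • 1) v = (toLin' (A j) - lam • 1) v := by
    have hcol (r k) (hk : k ≠ last) : A i r k = A j r k :=
      hcols i j k (by have := Fin.val_ne_of_ne hk; simp [last] at this; omega) r
    simp [mulVec_eq_of_col_eq_of_ne hcol hv]
  obtain ⟨W, hW0, hWtop, hWinv⟩ := exists_invariant_of_eqOn_hyperplane
    (fun i => toLin' (A i) - lam • 1) _ (by simpa using hn)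
    (by simpa using finrank_ker_proj_add_one (K := ℂ) last) hagree
    (fun i => ker_toLin'_sub_ne_bot_of_mem_spectrum (hlam i))
  refine ⟨W, hW0, hWtop, fun i x hx => ?_⟩
  have hshift : A i *ᵥ x = (toLin' (A i) - lam • 1) x + lam • x := by simp
  rw [hshift]
  exact W.add_mem (hWinv i x hx) (W.smul_mem lam hx)
end

section
/- Let n, p ≥ 2 and let A₁, …, A_p ∈ M_n(ℂ) have the same first n−1 columns. If there exists a nonzero proper subspace W of ℂⁿ with A_i W ⊆ W for all i, then the matrices A₁, …, A_p have a common eigenvalue, i.e. ⋂_{i=1}^p spec(A_i) ≠ ∅. -/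
/-!
The differences `A i - A j` vanish outside the last column, so `(A i - A j) y = y_n • c i j`.
If every vector of `W` has last coordinate `0`, the `A i` agree on `W` and an eigenvalue of
their common restriction to `W` is a common eigenvalue. Otherwise some `x ∈ W` has `x_n ≠ 0`,
which forces every `c i j` into `W`; then the `A i` induce the same map on `ℂⁿ / W`, and an
eigenvalue of that map is an eigenvalue of each `A i`.
-/

open Matrix

namespace Module.End

variable {K V : Type*} [Field K] [AddCommGroup V] [Module K V]

theorem HasEigenvalue.of_restrict {f : End K V} {W : Submodule K V} (hfW : ∀ x ∈ W, f x ∈ W)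
    {μ : K} (h : HasEigenvalue (f.restrict hfW) μ) : f.HasEigenvalue μ := by
  obtain ⟨⟨v, hvW⟩, hv⟩ := h.exists_hasEigenvector
  refine hasEigenvalue_of_hasEigenvector (x := v) ⟨?_, fun hv0 => hv.2 (Subtype.ext hv0)⟩
  exact eigenspace_restrict_le_eigenspace f hfW μ ⟨_, hv.1, rfl⟩

/-- An injective endomorphism of the finite-dimensional `W` maps `W` onto itself, so the
eigenvector `[y]` of the quotient map, with `y ∉ W`, forces `f - μ` to have a kernel. -/
theorem HasEigenvalue.of_mapQ [FiniteDimensional K V] {f : End K V} {W : Submodule K V}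
    (hfW : W ≤ W.comap f) {μ : K} (h : HasEigenvalue (W.mapQ W f hfW) μ) :
    f.HasEigenvalue μ := by
  obtain ⟨q, hq⟩ := h.exists_hasEigenvector
  obtain ⟨y, rfl⟩ := W.mkQ_surjective q
  set g : End K V := f - μ • 1
  have hgW : ∀ x ∈ W, g x ∈ W := fun x hx => W.sub_mem (hfW hx) (W.smul_mem μ hx)
  have hgy : g y ∈ W := by
    rw [← Submodule.Quotient.mk_eq_zero]
    simpa [g, sub_eq_zero] using hq.apply_eq_smul
  have hyW : y ∉ W := fun hy => hq.2 ((Submodule.Quotient.mk_eq_zero W).mpr hy)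
  by_contra hμ
  have hg : Function.Injective g := by
    rwa [hasEigenvalue_iff, not_not, eigenspace_def, LinearMap.ker_eq_bot] at hμ
  have hgW_inj : Function.Injective (g.restrict hgW) := fun a b hab =>
    Subtype.ext (hg (congrArg Subtype.val hab))
  obtain ⟨w, hw⟩ := LinearMap.injective_iff_surjective.mp hgW_inj ⟨g y, hgy⟩
  exact hyW (hg (congrArg Subtype.val hw) ▸ w.2)

variable [IsAlgClosed K] [FiniteDimensional K V] {ι : Type*} [Nonempty ι]

theorem exists_forall_hasEigenvalue_of_eqOn {f : ι → End K V} {W : Submodule K V}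
    (hW : W ≠ ⊥) (hfW : ∀ i, ∀ x ∈ W, f i x ∈ W) (heq : ∀ i j, ∀ x ∈ W, f i x = f j x) :
    ∃ μ, ∀ i, (f i).HasEigenvalue μ := by
  have : Nontrivial W := Submodule.nontrivial_iff_ne_bot.mpr hW
  let i₀ : ι := Classical.arbitrary ι
  obtain ⟨μ, hμ⟩ := exists_eigenvalue ((f i₀).restrict (hfW i₀))
  refine ⟨μ, fun i => HasEigenvalue.of_restrict (hfW i) ?_⟩
  convert hμ using 1
  ext x
  exact heq i i₀ x x.2

theorem exists_forall_hasEigenvalue_of_sub_mem {f : ι → End K V} {W : Submodule K V}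
    (hW : W ≠ ⊤) (hfW : ∀ i, W ≤ W.comap (f i)) (hsub : ∀ i j x, f i x - f j x ∈ W) :
    ∃ μ, ∀ i, (f i).HasEigenvalue μ := by
  have : Nontrivial (V ⧸ W) := Submodule.Quotient.nontrivial_iff.mpr hW
  let i₀ : ι := Classical.arbitrary ι
  obtain ⟨μ, hμ⟩ := exists_eigenvalue (W.mapQ W (f i₀) (hfW i₀))
  refine ⟨μ, fun i => HasEigenvalue.of_mapQ (hfW i) ?_⟩
  convert hμ using 1
  refine Submodule.linearMap_qext _ (LinearMap.ext fun x => ?_)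
  exact (Submodule.Quotient.eq W).mpr (hsub i i₀ x)

theorem exists_forall_hasEigenvalue_of_sub_eq_smul {f : ι → End K V} (φ : Module.Dual K V)
    (c : ι → ι → V) (hf : ∀ i j x, f i x - f j x = φ x • c i j) {W : Submodule K V}
    (hW₀ : W ≠ ⊥) (hW₁ : W ≠ ⊤) (hfW : ∀ i, ∀ x ∈ W, f i x ∈ W) :
    ∃ μ, ∀ i, (f i).HasEigenvalue μ := by
  by_cases hφ : ∀ x ∈ W, φ x = 0
  · refine exists_forall_hasEigenvalue_of_eqOn hW₀ hfW fun i j x hx => ?_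
    rw [← sub_eq_zero, hf, hφ x hx, zero_smul]
  · push Not at hφ
    obtain ⟨x, hxW, hx⟩ := hφ
    have hc : ∀ i j, c i j ∈ W := fun i j => by
      have h := W.smul_mem (φ x)⁻¹ (W.sub_mem (hfW i x hxW) (hfW j x hxW))
      rwa [hf, smul_smul, inv_mul_cancel₀ hx, one_smul] at h
    refine exists_forall_hasEigenvalue_of_sub_mem hW₁ (fun i x hx => hfW i x hx) fun i j y => ?_
    rw [hf]
    exact W.smul_mem _ (hc i j)

end Module.End

theorem Matrix.mulVec_sub_mulVec_of_col_eq {m n R : Type*} [Fintype n] [CommRing R]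
    {A B : Matrix m n R} {e : n} (h : ∀ k ≠ e, ∀ r, A r k = B r k) (y : n → R) :
    A *ᵥ y - B *ᵥ y = y e • (A - B)ᵀ e := by
  classical
  ext r
  rw [← sub_mulVec, mulVec, dotProduct, Finset.sum_eq_single e]
  · simp [mul_comm]
  · intro k _ hk
    simp [h k hk r]
  · simp

theorem stmt_6 (n p : ℕ) (hn : 2 ≤ n) (hp : 2 ≤ p)
    (A : Fin p → Matrix (Fin n) (Fin n) ℂ)
    (hcols : ∀ i j : Fin p, ∀ k : Fin n, (k : ℕ) < n - 1 → ∀ r : Fin n, A i r k = A j r k)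
    (W : Submodule ℂ (Fin n → ℂ)) (hW0 : W ≠ ⊥) (hW1 : W ≠ ⊤)
    (hinv : ∀ i, ∀ x ∈ W, (A i).mulVec x ∈ W) :
    ∃ lam : ℂ, ∀ i, lam ∈ spectrum ℂ (A i) := by
  have : Nonempty (Fin p) := ⟨⟨0, by omega⟩⟩
  let e : Fin n := ⟨n - 1, by omega⟩
  have hsub : ∀ i j y, (A i).toLin' y - (A j).toLin' y = y e • (A i - A j)ᵀ e :=
    fun i j => mulVec_sub_mulVec_of_col_eq fun k hk => hcols i j k <|
      lt_of_le_of_ne (Nat.le_sub_one_of_lt k.2) (Fin.val_ne_of_ne hk)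
  obtain ⟨μ, hμ⟩ := Module.End.exists_forall_hasEigenvalue_of_sub_eq_smul
    (LinearMap.proj e : Module.Dual ℂ (Fin n → ℂ)) (fun i j => (A i - A j)ᵀ e) hsub hW0 hW1 hinv
  exact ⟨μ, fun i => spectrum_toLin' (A i) ▸ (hμ i).mem_spectrum⟩
end

section
/- Let n ≥ 2 and let A, B ∈ GL_n(ℂ) with A·B⁻¹ a pseudo-reflection. Then the group generated by A and B acts irreducibly on ℂⁿ if and only if spec(A) ∩ spec(B) = ∅. -/
/-!
Put `f = A`, `g = B` and `R = range (f - g)`, of dimension at most one. If `W` is a nontrivial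
proper subspace invariant under both, then either `f - g` vanishes on `W`, so `f` and `g` agree
on `W`, or `(f - g) W` is a nonzero subspace of `R`, so `R ≤ W` and `f`, `g` induce the same map
on `V ⧸ W`. Either way an eigenvalue of the common restricted or induced map is an eigenvalue
of both `f` and `g`.

Conversely let `μ` be a common eigenvalue and `g x = μ x` with `x ≠ 0`. If `(f - g) x = 0`, the
line through `x` is invariant under both. Otherwise `R` is spanned by `(f - g) x = (f - μ) x`,
so `W = range (f - μ)` is nonzero, proper, contains `R`, and is therefore invariant under `f`
and under `g = f - (f - g)`.
-/

open Module LinearMap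

namespace Module.End

lemma mem_invtSubmodule_iff_of_range_sub_le {R M : Type*} [Ring R] [AddCommGroup M]
    [Module R M] {f g : End R M} {p : Submodule R M} (h : range (f - g) ≤ p) :
    p ∈ f.invtSubmodule ↔ p ∈ g.invtSubmodule := by
  have hfg (x : M) : f x - g x ∈ p := h ⟨x, rfl⟩
  simp only [mem_invtSubmodule_iff_forall_mem_of_mem]
  refine ⟨fun hf x hx => ?_, fun hg x hx => ?_⟩
  · simpa using p.sub_mem (hf x hx) (hfg x)
  · simpa using p.add_mem (hg x hx) (hfg x)

lemma span_singleton_mem_invtSubmodule {R M : Type*} [CommRing R] [AddCommGroup M]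
    [Module R M] {f : End R M} {x : M} {μ : R} (hx : f x = μ • x) :
    R ∙ x ∈ f.invtSubmodule := by
  rw [mem_invtSubmodule_iff_forall_mem_of_mem]
  intro y hy
  obtain ⟨c, rfl⟩ := Submodule.mem_span_singleton.1 hy
  rw [map_smul, hx, smul_comm]
  exact Submodule.smul_mem _ μ hy

end Module.End

lemma Submodule.le_of_mem_of_finrank_le_one {K V : Type*} [Field K] [AddCommGroup V]
    [Module K V] [FiniteDimensional K V] {S T : Submodule K V} (hS : finrank K S ≤ 1) {v : V}
    (hvS : v ∈ S) (hv : v ≠ 0) (hvT : v ∈ T) : S ≤ T := by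
  have hspan : K ∙ v = S :=
    eq_of_le_of_finrank_le ((span_singleton_le_iff_mem v S).2 hvS)
      (hS.trans (finrank_span_singleton hv).ge)
  rw [← hspan]
  exact (span_singleton_le_iff_mem v T).2 hvT

namespace Module.End

variable {K V : Type*} [Field K] [AddCommGroup V] [Module K V] {f g : End K V}

lemma hasEigenvalue_of_hasEigenvalue_restrict {p : Submodule K V} (hf : ∀ x ∈ p, f x ∈ p)
    {μ : K} (h : HasEigenvalue (f.restrict hf) μ) : f.HasEigenvalue μ := by
  obtain ⟨v, hv⟩ := h.exists_hasEigenvector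
  refine hasEigenvalue_of_hasEigenvector (x := (v : V)) ⟨?_, by simpa using hv.2⟩
  exact eigenspace_restrict_le_eigenspace f hf μ ⟨v, hv.1, rfl⟩

variable [FiniteDimensional K V]

lemma hasEigenvalue_of_hasEigenvalue_mapQ {p : Submodule K V} (hf : p ≤ p.comap f) {μ : K}
    (h : HasEigenvalue (p.mapQ p f hf) μ) : f.HasEigenvalue μ := by
  have hfμ : p ≤ p.comap (f - μ • 1) := fun x hx => p.sub_mem (hf hx) (p.smul_mem μ hx)
  have hmapQ : p.mapQ p (f - μ • 1) hfμ = p.mapQ p f hf - μ • 1 := by ext; simp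
  rw [hasEigenvalue_iff, eigenspace_def, ← det_eq_zero_iff_ker_ne_bot] at h ⊢
  rw [det_eq_det_mul_det p _ hfμ, hmapQ, h, mul_zero]

lemma range_sub_smul_one_ne_top {μ : K} (hf : f.HasEigenvalue μ) : range (f - μ • 1) ≠ ⊤ := by
  rwa [hasEigenvalue_iff, eigenspace_def, Ne, ker_eq_bot, injective_iff_surjective,
    ← range_eq_top] at hf

lemma exists_invtSubmodule_of_hasEigenvalue (hV : 1 < finrank K V)
    (hfg : finrank K (range (f - g)) ≤ 1) {μ : K} (hf : f.HasEigenvalue μ)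
    (hg : g.HasEigenvalue μ) :
    ∃ p : Submodule K V, p ∈ f.invtSubmodule ∧ p ∈ g.invtSubmodule ∧ p ≠ ⊥ ∧ p ≠ ⊤ := by
  obtain ⟨x, hxg⟩ := hg.exists_hasEigenvector
  obtain ⟨hxμ, hx⟩ := hasEigenvector_iff.1 hxg
  have hgx : g x = μ • x := mem_eigenspace_iff.1 hxμ
  by_cases hfgx : (f - g) x = 0
  · have hfx : f x = μ • x := by rwa [LinearMap.sub_apply, sub_eq_zero, hgx] at hfgx
    refine ⟨K ∙ x, span_singleton_mem_invtSubmodule hfx, span_singleton_mem_invtSubmodule hgx,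
      by simpa using hx, fun htop => ?_⟩
    have := finrank_span_singleton (K := K) hx
    rw [htop, finrank_top] at this
    omega
  · have hfμx : (f - μ • 1) x = (f - g) x := by simp [hgx]
    have hle : range (f - g) ≤ range (f - μ • 1) :=
      Submodule.le_of_mem_of_finrank_le_one hfg (mem_range_self _ x) hfgx
        (hfμx ▸ mem_range_self _ x)
    have hfp : range (f - μ • 1) ∈ f.invtSubmodule :=
      (mem_invtSubmodule_iff_of_range_sub_le le_rfl).2
        (invtSubmodule_le_invtSubmodule_smul 1 μ (by simp))
    refine ⟨_, hfp, (mem_invtSubmodule_iff_of_range_sub_le hle).1 hfp, fun hbot => hfgx ?_,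
      range_sub_smul_one_ne_top hf⟩
    rw [← hfμx, ← Submodule.mem_bot K, ← hbot]
    exact mem_range_self _ x

variable [IsAlgClosed K]

lemma exists_hasEigenvalue_of_mem_invtSubmodule (hfg : finrank K (range (f - g)) ≤ 1)
    {p : Submodule K V} (hf : p ∈ f.invtSubmodule) (hg : p ∈ g.invtSubmodule) (hbot : p ≠ ⊥)
    (htop : p ≠ ⊤) : ∃ μ, f.HasEigenvalue μ ∧ g.HasEigenvalue μ := by
  by_cases hker : p ≤ ker (f - g)
  · have : Nontrivial p := Submodule.nontrivial_iff_ne_bot.2 hbot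
    have hres : f.restrict hf = g.restrict hg :=
      LinearMap.ext fun x => Subtype.ext (sub_eq_zero.1 (hker x.2))
    obtain ⟨μ, hμ⟩ := exists_eigenvalue (f.restrict hf)
    exact ⟨μ, hasEigenvalue_of_hasEigenvalue_restrict hf hμ,
      hasEigenvalue_of_hasEigenvalue_restrict hg (hres ▸ hμ)⟩
  · obtain ⟨x, hxp, hx⟩ := SetLike.not_le_iff_exists.1 hker
    have hle : range (f - g) ≤ p :=
      Submodule.le_of_mem_of_finrank_le_one hfg (mem_range_self _ x) hx
        (p.sub_mem (hf hxp) (hg hxp))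
    have : Nontrivial (V ⧸ p) := Submodule.Quotient.nontrivial_iff.2 htop
    have hq : p.mapQ p f hf = p.mapQ p g hg := by
      ext x
      exact (Submodule.Quotient.eq p).2 (hle (mem_range_self _ x))
    obtain ⟨μ, hμ⟩ := exists_eigenvalue (p.mapQ p f hf)
    exact ⟨μ, hasEigenvalue_of_hasEigenvalue_mapQ hf hμ,
      hasEigenvalue_of_hasEigenvalue_mapQ hg (hq ▸ hμ)⟩

theorem forall_invtSubmodule_eq_bot_or_eq_top_iff (hV : 1 < finrank K V)
    (hfg : finrank K (range (f - g)) ≤ 1) :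
    (∀ p : Submodule K V, p ∈ f.invtSubmodule → p ∈ g.invtSubmodule → p = ⊥ ∨ p = ⊤) ↔
      ∀ μ, ¬(f.HasEigenvalue μ ∧ g.HasEigenvalue μ) := by
  constructor
  · rintro hirr μ ⟨hf, hg⟩
    obtain ⟨p, hfp, hgp, hbot, htop⟩ := exists_invtSubmodule_of_hasEigenvalue hV hfg hf hg
    exact (hirr p hfp hgp).elim hbot htop
  · intro hspec p hfp hgp
    by_contra! hp
    exact hspec _ (exists_hasEigenvalue_of_mem_invtSubmodule hfg hfp hgp hp.1 hp.2).choose_spec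

end Module.End

theorem stmt_8_general (n : ℕ) (hn : 2 ≤ n) (A B : Matrix (Fin n) (Fin n) ℂ)
    (hB : IsUnit B)
    (hpr : (A * B⁻¹ - 1).rank = 1) :
    (∀ W : Submodule ℂ (Fin n → ℂ),
        (∀ x ∈ W, A.mulVec x ∈ W) → (∀ x ∈ W, B.mulVec x ∈ W) → W = ⊥ ∨ W = ⊤) ↔
      spectrum ℂ A ∩ spectrum ℂ B = ∅ := by
  have hBdet := (Matrix.isUnit_iff_isUnit_det B).1 hB
  have hAB : A - B = (A * B⁻¹ - 1) * B := by
    rw [sub_mul, one_mul, Matrix.nonsing_inv_mul_cancel_right _ _ hBdet]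
  have hrank : (A - B).rank = 1 := by
    rw [hAB, Matrix.rank_mul_eq_left_of_isUnit_det B _ hBdet, hpr]
  have hrank' : finrank ℂ (range (Matrix.toLin' A - Matrix.toLin' B)) ≤ 1 := by
    rw [← map_sub, Matrix.toLin'_apply']
    exact hrank.le
  rw [Set.eq_empty_iff_forall_notMem]
  simp only [Set.mem_inter_iff, ← Matrix.spectrum_toLin' A, ← Matrix.spectrum_toLin' B,
    ← Module.End.hasEigenvalue_iff_mem_spectrum]
  exact Module.End.forall_invtSubmodule_eq_bot_or_eq_top_iff (by rwa [finrank_fin_fun]) hrank'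

theorem stmt_8 (n : ℕ) (hn : 2 ≤ n) (A B : Matrix (Fin n) (Fin n) ℂ)
    (hA : IsUnit A) (hB : IsUnit B)
    (hpr : (A * B⁻¹ - 1).rank = 1) :
    (∀ W : Submodule ℂ (Fin n → ℂ),
        (∀ x ∈ W, A.mulVec x ∈ W) → (∀ x ∈ W, B.mulVec x ∈ W) → W = ⊥ ∨ W = ⊤) ↔
      spectrum ℂ A ∩ spectrum ℂ B = ∅ :=
  stmt_8_general n hn A B hB hpr
end

section
/- Let n ≥ 2 and let A, B ∈ GL_n(ℂ) with rank(A − B) = 1. If spec(A) ∩ spec(B) = ∅, then A and B have no common eigenvector and stabilize no common hyperplane; i.e., ⟨A, B⟩ acts irreducibly on ℂⁿ. -/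
/-!
A subspace `W` invariant under `f` and `g` is invariant under `f - g`, whose range is at most a
line; so either `f - g` vanishes on `W`, or its range lies in `W`. In the first case `f` and `g`
agree on `W`, in the second they induce the same endomorphism of `V ⧸ W`. If `W` is proper and
nonzero, that space is nontrivial, so over an algebraically closed field the common endomorphism
has an eigenvalue, which is an eigenvalue of both `f` and `g`: the spectra of a restriction and
of a quotient map lie in the ambient spectrum, because the determinant is multiplicative along
`0 → W → V → V ⧸ W → 0`.
-/

open Module

theorem Submodule.span_singleton_le_comap_of_eq_smul {R M : Type*} [Semiring R]
    [AddCommMonoid M] [Module R M] {f : End R M} {v : M} {c : R} (hv : f v = c • v) :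
    span R {v} ≤ (span R {v}).comap f := by
  rw [span_singleton_le_iff_mem, mem_comap, hv]
  exact smul_mem _ c (mem_span_singleton_self v)

section InvariantSubspace

variable {K V : Type*} [Field K] [AddCommGroup V] [Module K V] [FiniteDimensional K V]

theorem LinearMap.isUnit_restrict_and_isUnit_mapQ {e : End K V} (he : IsUnit e)
    {p : Submodule K V} (hp : p ≤ p.comap e) :
    IsUnit (e.restrict hp) ∧ IsUnit (p.mapQ p e hp) := by
  rw [LinearMap.isUnit_iff_isUnit_det, LinearMap.det_eq_det_mul_det p e hp, IsUnit.mul_iff] at he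
  simpa only [LinearMap.isUnit_iff_isUnit_det] using he

theorem LinearMap.spectrum_restrict_union_spectrum_mapQ_subset {f : End K V} {p : Submodule K V}
    (hp : p ≤ p.comap f) :
    spectrum K (f.restrict hp) ∪ spectrum K (p.mapQ p f hp) ⊆ spectrum K f := by
  intro μ hμ
  by_contra hμf
  rw [spectrum.notMem_iff] at hμf
  have hp' : p ≤ p.comap (algebraMap K (End K V) μ - f) := fun x hx =>
    p.sub_mem (p.smul_mem μ hx) (hp hx)
  have hres : (algebraMap K (End K V) μ - f).restrict hp' =
      algebraMap K (End K p) μ - f.restrict hp := by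
    ext x
    simp [Algebra.algebraMap_eq_smul_one]
  have hquot : p.mapQ p (algebraMap K (End K V) μ - f) hp' =
      algebraMap K (End K (V ⧸ p)) μ - p.mapQ p f hp := by
    ext x
    simp [Algebra.algebraMap_eq_smul_one]
  obtain ⟨hunit_res, hunit_quot⟩ := isUnit_restrict_and_isUnit_mapQ hμf hp'
  rw [hres] at hunit_res
  rw [hquot] at hunit_quot
  rcases hμ with hμ | hμ
  exacts [hμ hunit_res, hμ hunit_quot]

theorem LinearMap.range_le_or_le_ker_of_finrank_range_le_one {φ : End K V}
    (hφ : finrank K (LinearMap.range φ) ≤ 1) {p : Submodule K V} (hp : p ≤ p.comap φ) :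
    LinearMap.range φ ≤ p ∨ p ≤ LinearMap.ker φ := by
  refine or_iff_not_imp_right.2 fun hker => ?_
  obtain ⟨w, hw, hφw⟩ := SetLike.not_le_iff_exists.1 hker
  have hline : Submodule.span K {φ w} = LinearMap.range φ :=
    Submodule.eq_of_le_of_finrank_le
      ((Submodule.span_singleton_le_iff_mem _ _).2 (LinearMap.mem_range_self φ w))
      (hφ.trans (finrank_span_singleton hφw).ge)
  rw [← hline, Submodule.span_singleton_le_iff_mem]
  exact hp hw

theorem Submodule.eq_bot_or_eq_top_of_disjoint_spectrum [IsAlgClosed K] {f g : End K V}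
    (hrk : finrank K (LinearMap.range (f - g)) ≤ 1)
    (hσ : Disjoint (spectrum K f) (spectrum K g))
    {p : Submodule K V} (hf : p ≤ p.comap f) (hg : p ≤ p.comap g) : p = ⊥ ∨ p = ⊤ := by
  have hfg : p ≤ p.comap (f - g) := fun x hx => p.sub_mem (hf hx) (hg hx)
  have hσf := LinearMap.spectrum_restrict_union_spectrum_mapQ_subset hf
  have hσg := LinearMap.spectrum_restrict_union_spectrum_mapQ_subset hg
  rcases LinearMap.range_le_or_le_ker_of_finrank_range_le_one hrk hfg with hrange | hker
  · refine Or.inr (by_contra fun hp => ?_)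
    have : Nontrivial (V ⧸ p) := Submodule.Quotient.nontrivial_iff.mpr hp
    have heq : p.mapQ p f hf = p.mapQ p g hg := by
      ext x
      exact (Submodule.Quotient.eq p).mpr (hrange (LinearMap.mem_range_self _ x))
    obtain ⟨μ, hμ⟩ := spectrum.nonempty_of_isAlgClosed_of_finiteDimensional K (p.mapQ p f hf)
    exact hσ.ne_of_mem (hσf (Or.inr hμ)) (hσg (Or.inr (heq ▸ hμ))) rfl
  · refine Or.inl (by_contra fun hp => ?_)
    have : Nontrivial p := Submodule.nontrivial_iff_ne_bot.mpr hp
    have heq : f.restrict hf = g.restrict hg := by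
      ext x
      exact sub_eq_zero.mp (hker x.2)
    obtain ⟨μ, hμ⟩ := spectrum.nonempty_of_isAlgClosed_of_finiteDimensional K (f.restrict hf)
    exact hσ.ne_of_mem (hσf (Or.inl hμ)) (hσg (Or.inl (heq ▸ hμ))) rfl

end InvariantSubspace

theorem stmt_9_general (n : ℕ) (hn : 2 ≤ n) (A B : Matrix (Fin n) (Fin n) ℂ)
    (hrk : (A - B).rank = 1)
    (hspec : spectrum ℂ A ∩ spectrum ℂ B = ∅) :
    (¬ ∃ v : Fin n → ℂ, v ≠ 0 ∧ ∃ μ ν : ℂ, A.mulVec v = μ • v ∧ B.mulVec v = ν • v) ∧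
    (¬ ∃ W : Submodule ℂ (Fin n → ℂ), Module.finrank ℂ W = n - 1 ∧
        (∀ x ∈ W, A.mulVec x ∈ W) ∧ (∀ x ∈ W, B.mulVec x ∈ W)) ∧
    (∀ W : Submodule ℂ (Fin n → ℂ),
        (∀ x ∈ W, A.mulVec x ∈ W) → (∀ x ∈ W, B.mulVec x ∈ W) → W = ⊥ ∨ W = ⊤) := by
  have irreducible : ∀ W : Submodule ℂ (Fin n → ℂ),
      (∀ x ∈ W, A.mulVec x ∈ W) → (∀ x ∈ W, B.mulVec x ∈ W) → W = ⊥ ∨ W = ⊤ := by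
    intro W hA hB
    refine Submodule.eq_bot_or_eq_top_of_disjoint_spectrum (f := A.toLin') (g := B.toLin')
      ?_ ?_ hA hB
    · rw [← map_sub, Matrix.toLin'_apply']
      exact hrk.le
    · rw [Matrix.spectrum_toLin', Matrix.spectrum_toLin', Set.disjoint_iff_inter_eq_empty]
      exact hspec
  have finrank_eq : ∀ W : Submodule ℂ (Fin n → ℂ), (∀ x ∈ W, A.mulVec x ∈ W) →
      (∀ x ∈ W, B.mulVec x ∈ W) → finrank ℂ W = 0 ∨ finrank ℂ W = n := by
    intro W hA hB
    rcases irreducible W hA hB with rfl | rfl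
    exacts [Or.inl (by simp), Or.inr (by simp)]
  refine ⟨?_, ?_, irreducible⟩
  · rintro ⟨v, hv, μ, ν, hμ, hν⟩
    have hdim := finrank_eq _ (Submodule.span_singleton_le_comap_of_eq_smul (f := A.toLin') hμ)
      (Submodule.span_singleton_le_comap_of_eq_smul (f := B.toLin') hν)
    rw [finrank_span_singleton hv] at hdim
    omega
  · rintro ⟨W, hW, hA, hB⟩
    have hdim := finrank_eq W hA hB
    omega

theorem stmt_9 (n : ℕ) (hn : 2 ≤ n) (A B : Matrix (Fin n) (Fin n) ℂ)
    (hA : IsUnit A) (hB : IsUnit B)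
    (hrk : (A - B).rank = 1)
    (hspec : spectrum ℂ A ∩ spectrum ℂ B = ∅) :
    (¬ ∃ v : Fin n → ℂ, v ≠ 0 ∧ ∃ μ ν : ℂ, A.mulVec v = μ • v ∧ B.mulVec v = ν • v) ∧
    (¬ ∃ W : Submodule ℂ (Fin n → ℂ), Module.finrank ℂ W = n - 1 ∧
        (∀ x ∈ W, A.mulVec x ∈ W) ∧ (∀ x ∈ W, B.mulVec x ∈ W)) ∧
    (∀ W : Submodule ℂ (Fin n → ℂ),
        (∀ x ∈ W, A.mulVec x ∈ W) → (∀ x ∈ W, B.mulVec x ∈ W) → W = ⊥ ∨ W = ⊤) :=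
  stmt_9_general n hn A B hrk hspec
end

section
/- Let n ≥ 2 and let A, B ∈ GL_n(ℂ) with rank(A − B) = 1. If ⟨A, B⟩ acts reducibly on ℂⁿ (there is a nonzero proper common invariant subspace), then spec(A) ∩ spec(B) ≠ ∅. -/
/-!
Since `A - B` has rank one, either it vanishes on `W` or its range is a line inside `W`. In the
first case `A` and `B` agree on `W`; in the second they induce the same map on `ℂⁿ / W`. Either
way `A` and `B` share the spectrum of an operator on a nonzero space, which is nonempty over `ℂ`,
and the spectrum of an operator with an invariant subspace is the union of the spectra of its
restriction and of the induced quotient map, because the determinant splits accordingly.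
-/

open Module LinearMap

variable {K V : Type*} [Field K] [AddCommGroup V] [Module K V] [FiniteDimensional K V]

theorem LinearMap.le_ker_or_range_le_of_finrank_range_le_one {h : V →ₗ[K] V}
    {W : Submodule K V} (hW : W ≤ W.comap h) (hrk : finrank K (range h) ≤ 1) :
    W ≤ ker h ∨ range h ≤ W := by
  rw [or_iff_not_imp_left]
  intro hker
  obtain ⟨x, hxW, hx⟩ := SetLike.not_le_iff_exists.mp hker
  have hline : K ∙ h x = range h := by
    refine Submodule.eq_of_le_of_finrank_le ?_ ?_
    · exact (Submodule.span_singleton_le_iff_mem _ _).mpr (mem_range_self h x)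
    · rwa [finrank_span_singleton hx]
  rw [← hline]
  exact (Submodule.span_singleton_le_iff_mem _ _).mpr (hW hxW)

namespace Module.End

theorem spectrum_eq_spectrum_restrict_union_spectrum_mapQ (f : End K V) {W : Submodule K V}
    (hf : W ≤ W.comap f) :
    spectrum K f = spectrum K (f.restrict hf) ∪ spectrum K (W.mapQ W f hf) := by
  ext μ
  set g := algebraMap K (End K V) μ - f
  have hg : W ≤ W.comap g := fun x hx => W.sub_mem (W.smul_mem μ hx) (hf hx)
  have hres : g.restrict hg = algebraMap K _ μ - f.restrict hf := by ext; rfl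
  have hquo : W.mapQ W g hg = algebraMap K _ μ - W.mapQ W f hf := by ext; rfl
  rw [Set.mem_union, spectrum.mem_iff, spectrum.mem_iff, spectrum.mem_iff, ← hres, ← hquo,
    isUnit_iff_isUnit_det, det_eq_det_mul_det W g hg, IsUnit.mul_iff,
    isUnit_iff_isUnit_det, isUnit_iff_isUnit_det, not_and_or]

theorem spectrum_inter_nonempty_of_finrank_range_sub_le_one [IsAlgClosed K]
    {f g : End K V} {W : Submodule K V} (hW0 : W ≠ ⊥) (hW1 : W ≠ ⊤)
    (hf : W ≤ W.comap f) (hg : W ≤ W.comap g)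
    (hrk : finrank K (range (f - g)) ≤ 1) :
    (spectrum K f ∩ spectrum K g).Nonempty := by
  rw [spectrum_eq_spectrum_restrict_union_spectrum_mapQ f hf,
    spectrum_eq_spectrum_restrict_union_spectrum_mapQ g hg]
  have hfg : W ≤ W.comap (f - g) := fun x hx => W.sub_mem (hf hx) (hg hx)
  rcases le_ker_or_range_le_of_finrank_range_le_one hfg hrk with hker | hrange
  · have hres : f.restrict hf = g.restrict hg :=
      LinearMap.ext fun x => Subtype.ext (sub_eq_zero.mp (hker x.2))
    have : Nontrivial W := Submodule.nontrivial_iff_ne_bot.mpr hW0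
    obtain ⟨μ, hμ⟩ := spectrum.nonempty_of_isAlgClosed_of_finiteDimensional K (f.restrict hf)
    exact ⟨μ, .inl hμ, .inl (hres ▸ hμ)⟩
  · have hquo : W.mapQ W f hf = W.mapQ W g hg := by
      ext x
      exact (Submodule.Quotient.eq W).mpr (hrange (mem_range_self (f - g) x))
    have : Nontrivial (V ⧸ W) := Submodule.Quotient.nontrivial_iff.mpr hW1
    obtain ⟨μ, hμ⟩ := spectrum.nonempty_of_isAlgClosed_of_finiteDimensional K (W.mapQ W f hf)
    exact ⟨μ, .inr hμ, .inr (hquo ▸ hμ)⟩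

end Module.End

theorem stmt_10_general (n : ℕ) (A B : Matrix (Fin n) (Fin n) ℂ)
    (hrk : (A - B).rank = 1)
    (W : Submodule ℂ (Fin n → ℂ)) (hW0 : W ≠ ⊥) (hW1 : W ≠ ⊤)
    (hAW : ∀ x ∈ W, A.mulVec x ∈ W) (hBW : ∀ x ∈ W, B.mulVec x ∈ W) :
    (spectrum ℂ A ∩ spectrum ℂ B).Nonempty := by
  rw [← AlgEquiv.spectrum_eq Matrix.toLinAlgEquiv' A,
    ← AlgEquiv.spectrum_eq Matrix.toLinAlgEquiv' B]
  refine End.spectrum_inter_nonempty_of_finrank_range_sub_le_one hW0 hW1 hAW hBW ?_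
  rw [← map_sub]
  exact hrk.le

theorem stmt_10 (n : ℕ) (hn : 2 ≤ n) (A B : Matrix (Fin n) (Fin n) ℂ)
    (hA : IsUnit A) (hB : IsUnit B)
    (hrk : (A - B).rank = 1)
    (W : Submodule ℂ (Fin n → ℂ)) (hW0 : W ≠ ⊥) (hW1 : W ≠ ⊤)
    (hAW : ∀ x ∈ W, A.mulVec x ∈ W) (hBW : ∀ x ∈ W, B.mulVec x ∈ W) :
    (spectrum ℂ A ∩ spectrum ℂ B).Nonempty :=
  stmt_10_general n A B hrk W hW0 hW1 hAW hBW
end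

section
/- Let n, p ≥ 2 and let A₁, …, A_p ∈ GL_n(ℂ) have the same first n−1 columns with respect to a basis e₁,…,e_n, with ⋂_{i=1}^p spec(A_i) = ∅. Then there exists a vector v ∈ ℂⁿ such that {v, A₁v, A₁²v, …, A₁^{n−1}v} is a basis of ℂⁿ and {v, A₁v, …, A₁^{n−2}v} spans W = span(e₁,…,e_{n−1}); consequently, with respect to this new basis each A_i is the companion matrix of its own characteristic polynomial. -/
/-! Let `g = A₁` and let `V_k` be the space of vectors `x` with `x, g x, …, g^(k-1) x ∈ W`.
Since `V_(k+1) = W ⊓ g⁻¹(V_k)` and `W` is a hyperplane, each step lowers the dimension by at most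
one, so `V_(n-1) ≠ 0`. Once the chain stabilises, `V_k` is a `g`-invariant subspace of `W`; all
`A_i` agree with `g` on `W`, so an eigenvector of `g` in `V_k` would be a common eigenvector of the
`A_i`. Hence the chain strictly decreases to `V_n = 0`, and any nonzero `v ∈ V_(n-1)` has
`v, …, g^(n-2) v ∈ W` but `g^(n-1) v ∉ W`, which makes `v, g v, …, g^(n-1) v` independent. In this
basis every `A_i` shifts the first `n - 1` vectors, and Cayley–Hamilton gives the last column. -/

/-- The companion matrix of `X^n + c_{n-1} X^{n-1} + ⋯ + c_0`:
ones on the subdiagonal, last column `(-c_0, …, -c_{n-1})ᵀ`, zeros elsewhere. -/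
def companionMatrix (n : ℕ) (c : Fin n → ℂ) : Matrix (Fin n) (Fin n) ℂ :=
  fun i j => if (j : ℕ) = n - 1 then -c i else if (i : ℕ) = (j : ℕ) + 1 then 1 else 0

open Module Submodule

section Codimension

variable {K E F : Type*} [Field K] [AddCommGroup E] [Module K E] [AddCommGroup F] [Module K F]
  [FiniteDimensional K E]

theorem Submodule.finrank_add_finrank_le_finrank_inf_add (A B : Submodule K E) :
    finrank K A + finrank K B ≤ finrank K ↥(A ⊓ B) + finrank K E := by
  rw [← Submodule.finrank_sup_add_finrank_inf_eq]
  have := (A ⊔ B).finrank_le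
  omega

theorem Submodule.finrank_add_finrank_le_finrank_comap_add [FiniteDimensional K F]
    (f : E →ₗ[K] F) (U : Submodule K F) :
    finrank K U + finrank K E ≤ finrank K (U.comap f) + finrank K F := by
  have hker : LinearMap.ker (U.mkQ ∘ₗ f) = U.comap f := by
    rw [LinearMap.ker_comp, Submodule.ker_mkQ]
  have h₁ := LinearMap.finrank_range_add_finrank_ker (U.mkQ ∘ₗ f)
  have h₂ := (LinearMap.range (U.mkQ ∘ₗ f)).finrank_le
  have h₃ := U.finrank_quotient_add_finrank
  rw [hker] at h₁
  omega

end Codimension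

theorem finrank_span_setOf_lt {K E : Type*} [Field K] [AddCommGroup E] [Module K E] {n m : ℕ}
    {u : Fin n → E} (hu : LinearIndependent K u) (hm : m ≤ n) :
    finrank K (span K {x | ∃ k : Fin n, (k : ℕ) < m ∧ x = u k}) = m := by
  have hset : {x | ∃ k : Fin n, (k : ℕ) < m ∧ x = u k} = Set.range (u ∘ Fin.castLE hm) := by
    ext x
    constructor
    · rintro ⟨k, hk, rfl⟩
      exact ⟨⟨k, hk⟩, rfl⟩
    · rintro ⟨k, rfl⟩
      exact ⟨Fin.castLE hm k, k.2, rfl⟩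
  rw [hset, finrank_span_eq_card (hu.comp _ (Fin.castLE_injective hm)), Fintype.card_fin]

theorem span_setOf_lt_eq {K E : Type*} [Field K] [AddCommGroup E] [Module K E] {n m : ℕ}
    {u : Fin n → E} {W : Submodule K E} [FiniteDimensional K W] (hu : LinearIndependent K u)
    (hm : m ≤ n) (huW : ∀ k : Fin n, (k : ℕ) < m → u k ∈ W) (hW : finrank K W = m) :
    span K {x | ∃ k : Fin n, (k : ℕ) < m ∧ x = u k} = W := by
  refine eq_of_le_of_finrank_eq (span_le.2 ?_) (by rw [finrank_span_setOf_lt hu hm, hW])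
  rintro _ ⟨k, hk, rfl⟩
  exact huW k hk

namespace Module.End

variable {K E : Type*} [Field K] [AddCommGroup E] [Module K E] (f : Module.End K E)
  (W : Submodule K E)

def stayWithin : ℕ → Submodule K E
  | 0 => ⊤
  | k + 1 => W ⊓ (stayWithin k).comap f

variable {f W}

theorem stayWithin_zero : f.stayWithin W 0 = ⊤ := rfl

theorem stayWithin_succ (k : ℕ) : f.stayWithin W (k + 1) = W ⊓ (f.stayWithin W k).comap f := rfl

theorem mem_stayWithin {k : ℕ} {x : E} : x ∈ f.stayWithin W k ↔ ∀ j < k, (f ^ j) x ∈ W := by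
  induction k generalizing x with
  | zero => simp [stayWithin]
  | succ k ih =>
    rw [stayWithin_succ, mem_inf, mem_comap, ih, Nat.forall_lt_succ_left]
    simp only [pow_zero, one_apply, pow_succ, mul_apply]

theorem stayWithin_succ_le (k : ℕ) : f.stayWithin W (k + 1) ≤ f.stayWithin W k :=
  fun _ hx => mem_stayWithin.2 fun j hj => mem_stayWithin.1 hx j (by omega)

theorem stayWithin_mem_invtSubmodule_of_succ_eq {k : ℕ}
    (h : f.stayWithin W (k + 1) = f.stayWithin W k) : f.stayWithin W k ∈ f.invtSubmodule :=
  h.symm.le.trans inf_le_right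

-- `codim (f.stayWithin W k) ≤ k * codim W`, written without truncated subtraction.
theorem finrank_add_le_finrank_stayWithin_add [FiniteDimensional K E] (k : ℕ) :
    finrank K E + k * finrank K W ≤ finrank K (f.stayWithin W k) + k * finrank K E := by
  induction k with
  | zero =>
    rw [stayWithin_zero]
    simp
  | succ k ih =>
    have h₁ := finrank_add_finrank_le_finrank_inf_add W ((f.stayWithin W k).comap f)
    have h₂ := finrank_add_finrank_le_finrank_comap_add f (f.stayWithin W k)
    change _ ≤ finrank K ↥(W ⊓ (f.stayWithin W k).comap f) + _
    nlinarith

theorem stayWithin_finrank_succ_eq_bot [FiniteDimensional K E]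
    (h : ∀ U ∈ f.invtSubmodule, U ≤ W → U = ⊥) : f.stayWithin W (finrank K W + 1) = ⊥ := by
  have key : ∀ k, f.stayWithin W (k + 1) = ⊥ ∨
      finrank K (f.stayWithin W (k + 1)) + k ≤ finrank K W := by
    intro k
    induction k with
    | zero =>
      rw [stayWithin_succ, stayWithin_zero, comap_top, inf_top_eq]
      exact .inr le_rfl
    | succ k ih =>
      by_cases hbot : f.stayWithin W (k + 1) = ⊥
      · exact .inl (le_bot_iff.1 (hbot ▸ stayWithin_succ_le (k + 1)))
      have hlt : f.stayWithin W (k + 1 + 1) < f.stayWithin W (k + 1) :=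
        (stayWithin_succ_le _).lt_of_ne fun heq =>
          hbot (h _ (stayWithin_mem_invtSubmodule_of_succ_eq heq) inf_le_left)
      have := finrank_lt_finrank_of_lt hlt
      have := ih.resolve_left hbot
      right
      omega
  rcases key (finrank K W) with hbot | hle
  · exact hbot
  · exact finrank_eq_zero.1 (by omega)

theorem exists_pow_apply_mem_and_notMem [FiniteDimensional K E]
    (hW : finrank K W + 1 = finrank K E) (h : ∀ U ∈ f.invtSubmodule, U ≤ W → U = ⊥) :
    ∃ v, (∀ j < finrank K W, (f ^ j) v ∈ W) ∧ (f ^ finrank K W) v ∉ W := by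
  set d := finrank K W
  have hpos : 0 < finrank K (f.stayWithin W d) := by
    have := finrank_add_le_finrank_stayWithin_add (f := f) (W := W) d
    rw [← hW] at this
    nlinarith
  obtain ⟨v, hv, hv0⟩ := exists_mem_ne_zero_of_ne_bot (finrank_eq_zero.not.1 hpos.ne')
  refine ⟨v, mem_stayWithin.1 hv, fun hd => hv0 ?_⟩
  rw [← mem_bot K, ← stayWithin_finrank_succ_eq_bot h, mem_stayWithin, Nat.forall_lt_succ_right]
  exact ⟨mem_stayWithin.1 hv, hd⟩

variable {v : E} {m : ℕ}

theorem pow_apply_notMem_span (hW : ∀ j < m, (f ^ j) v ∈ W) (hm : (f ^ m) v ∉ W) {k : ℕ}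
    (hk : k ≤ m) : (f ^ k) v ∉ span K (Set.range fun j : Fin k => (f ^ (j : ℕ)) v) := by
  set U := span K (Set.range fun j : Fin k => (f ^ (j : ℕ)) v)
  intro hkU
  have hU : U ∈ f.invtSubmodule := span_le.2 <| by
    rintro _ ⟨j, rfl⟩
    change f ((f ^ (j : ℕ)) v) ∈ U
    rw [← mul_apply, ← pow_succ']
    rcases (Nat.succ_le_of_lt j.2).lt_or_eq with hj | hj
    · exact subset_span ⟨⟨j + 1, hj⟩, rfl⟩
    · rwa [← hj] at hkU
  have hiter : ∀ i, (f ^ (k + i)) v ∈ U := by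
    intro i
    induction i with
    | zero => exact hkU
    | succ i ih =>
      rw [← add_assoc, pow_succ', mul_apply]
      exact hU ih
  have hUW : U ≤ W := span_le.2 <| by
    rintro _ ⟨j, rfl⟩
    exact hW j (by omega)
  exact hm (hUW (by simpa [Nat.add_sub_cancel' hk] using hiter (m - k)))

theorem linearIndependent_pow_apply (hW : ∀ j < m, (f ^ j) v ∈ W) (hm : (f ^ m) v ∉ W)
    {k : ℕ} (hk : k ≤ m + 1) : LinearIndependent K fun j : Fin k => (f ^ (j : ℕ)) v := by
  induction k with
  | zero => exact linearIndependent_empty_type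
  | succ k ih =>
    rw [linearIndependent_finSucc']
    exact ⟨ih (by omega), pow_apply_notMem_span hW hm (by omega)⟩

theorem exists_hasEigenvector_mem_of_mem_invtSubmodule [IsAlgClosed K] [FiniteDimensional K E]
    {U : Submodule K E} (hU : U ∈ f.invtSubmodule) (hne : U ≠ ⊥) :
    ∃ μ, ∃ x ∈ U, f.HasEigenvector μ x := by
  have : Nontrivial U := nontrivial_iff_ne_bot.2 hne
  obtain ⟨μ, hμ⟩ := Module.End.exists_eigenvalue (f.restrict hU)
  obtain ⟨x, hx⟩ := hμ.exists_hasEigenvector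
  refine ⟨μ, x, x.2, hasEigenvector_iff.2 ⟨mem_eigenspace_iff.2 ?_, by simpa using hx.2⟩⟩
  exact congrArg Subtype.val hx.apply_eq_smul

theorem eq_bot_of_eqOn_of_not_exists_mem_spectrum [IsAlgClosed K] [FiniteDimensional K E]
    {ι : Type*} {g : ι → Module.End K E} (hfg : ∀ i, Set.EqOn (g i) f W)
    (hspec : ¬∃ μ, ∀ i, μ ∈ spectrum K (g i)) {U : Submodule K E} (hU : U ∈ f.invtSubmodule)
    (hUW : U ≤ W) : U = ⊥ := by
  by_contra hne
  obtain ⟨μ, x, hxU, hx⟩ := exists_hasEigenvector_mem_of_mem_invtSubmodule hU hne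
  refine hspec ⟨μ, fun i => (hasEigenvalue_of_hasEigenvector (x := x) ?_).mem_spectrum⟩
  rw [hasEigenvector_iff, mem_eigenspace_iff] at hx ⊢
  exact hfg i (hUW hxU) ▸ hx

end Module.End

theorem LinearMap.pow_finrank_eq_neg_sum {K E : Type*} [Field K] [AddCommGroup E] [Module K E]
    [FiniteDimensional K E] (T : Module.End K E) :
    T ^ finrank K E = -∑ i ∈ Finset.range (finrank K E), T.charpoly.coeff i • T ^ i := by
  have h := T.aeval_self_charpoly
  rw [T.charpoly_monic.as_sum, T.charpoly_natDegree] at h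
  simp only [map_add, map_sum, map_mul, map_pow, Polynomial.aeval_X, Polynomial.aeval_C,
    Algebra.algebraMap_eq_smul_one, smul_mul_assoc, one_mul] at h
  exact eq_neg_of_add_eq_zero_left h

theorem LinearMap.toMatrix_eq_companionMatrix {E : Type*} [AddCommGroup E] [Module ℂ E]
    [FiniteDimensional ℂ E] {n : ℕ} (b : Basis (Fin n) ℂ E) (T : Module.End ℂ E)
    (hT : ∀ (j : Fin n) (hj : (j : ℕ) + 1 < n), T (b j) = b ⟨j + 1, hj⟩) :
    LinearMap.toMatrix b b T = companionMatrix n (fun k => T.charpoly.coeff k) := by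
  have hdim : finrank ℂ E = n := by simp [finrank_eq_card_basis b]
  cases n with
  | zero => ext r; exact r.elim0
  | succ m =>
  have hpow : ∀ k (hk : k < m + 1), (T ^ k) (b 0) = b ⟨k, hk⟩ := by
    intro k hk
    induction k with
    | zero => simp
    | succ k ih => rw [pow_succ', Module.End.mul_apply, ih (by omega), hT]
  have hlast : T (b ⟨m, m.lt_succ_self⟩) = ∑ k : Fin (m + 1), (-T.charpoly.coeff k) • b k := by
    have hCH := T.pow_finrank_eq_neg_sum
    rw [hdim] at hCH
    rw [← hpow m (by omega), ← Module.End.mul_apply, ← pow_succ', hCH, Finset.sum_range]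
    simp [Finset.sum_apply, neg_smul, fun k : Fin (m + 1) => hpow k k.2]
  ext r j
  rw [LinearMap.toMatrix_apply]
  by_cases hj : (j : ℕ) = m
  · obtain rfl : j = ⟨m, m.lt_succ_self⟩ := Fin.ext hj
    rw [hlast, b.repr_sum_self]
    simp [companionMatrix]
  · rw [hT j (by omega), b.repr_self, Finsupp.single_apply]
    simp [companionMatrix, hj, Fin.ext_iff, eq_comm]

theorem stmt_14 (n p : ℕ) (hn : 2 ≤ n) (hp : 2 ≤ p)
    (A : Fin p → Matrix (Fin n) (Fin n) ℂ)
    (e : Module.Basis (Fin n) ℂ (Fin n → ℂ))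
    (hcols : ∀ i j : Fin p, ∀ k : Fin n, (k : ℕ) < n - 1 →
      (A i).mulVec (e k) = (A j).mulVec (e k))
    (hspec : ¬ ∃ μ : ℂ, ∀ i, μ ∈ spectrum ℂ (A i))
    (W : Submodule ℂ (Fin n → ℂ))
    (hW : W = Submodule.span ℂ {x | ∃ k : Fin n, (k : ℕ) < n - 1 ∧ x = e k}) :
    ∃ (v : Fin n → ℂ) (b : Module.Basis (Fin n) ℂ (Fin n → ℂ)),
      (∀ k : Fin n, b k = ((A ⟨0, by omega⟩) ^ (k : ℕ)).mulVec v) ∧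
      Submodule.span ℂ
          {x | ∃ k : Fin n, (k : ℕ) < n - 1 ∧ x = ((A ⟨0, by omega⟩) ^ (k : ℕ)).mulVec v} = W ∧
      ∀ i, LinearMap.toMatrix b b (A i).mulVecLin =
        companionMatrix n (fun k => (A i).charpoly.coeff (k : ℕ)) := by
  set T : Fin p → Module.End ℂ (Fin n → ℂ) := fun i => Matrix.toLinAlgEquiv' (A i)
  set g := T ⟨0, by omega⟩
  have hpow (k : ℕ) (x : Fin n → ℂ) : (A ⟨0, by omega⟩ ^ k).mulVec x = (g ^ k) x := by
    simp [g, T, ← map_pow, Matrix.toLinAlgEquiv'_apply]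
  have hagree (i : Fin p) : Set.EqOn (T i) g W := by
    rw [hW]
    refine LinearMap.eqOn_span' ?_
    rintro _ ⟨k, hk, rfl⟩
    exact hcols i _ k hk
  have hWrank : finrank ℂ W = n - 1 := hW ▸ finrank_span_setOf_lt e.linearIndependent (by omega)
  have hnoinv : ∀ U ∈ g.invtSubmodule, U ≤ W → U = ⊥ := fun U hU hUW =>
    Module.End.eq_bot_of_eqOn_of_not_exists_mem_spectrum hagree
      (by simpa [T, AlgEquiv.spectrum_eq] using hspec) hU hUW
  obtain ⟨v, hvW, hvnW⟩ :=
    g.exists_pow_apply_mem_and_notMem (by rw [hWrank, finrank_fin_fun]; omega) hnoinv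
  rw [hWrank] at hvW hvnW
  have : Nonempty (Fin n) := ⟨⟨0, by omega⟩⟩
  let b := basisOfLinearIndependentOfCardEqFinrank
    (Module.End.linearIndependent_pow_apply hvW hvnW (k := n) (by omega)) (by simp)
  have hb (k : Fin n) : b k = (A ⟨0, by omega⟩ ^ (k : ℕ)).mulVec v := by
    simp [b, hpow]
  refine ⟨v, b, hb, ?_, fun i => ?_⟩
  · exact span_setOf_lt_eq (funext hb ▸ b.linearIndependent) (by omega)
      (fun k hk => hpow k v ▸ hvW k hk) hWrank
  · rw [← Matrix.charpoly_toLin']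
    refine LinearMap.toMatrix_eq_companionMatrix b _ fun j hj => ?_
    simp only [b, coe_basisOfLinearIndependentOfCardEqFinrank]
    change T i _ = _
    rw [hagree i (hvW j (by omega)), ← Module.End.mul_apply, ← pow_succ']
end

section
/- Let n, p ≥ 2 and let A₁, …, A_p and B₁, …, B_p be two families in GL_n(ℂ), each family having the same first n−1 columns (A_i e_k = A_j e_k and B_i e_k = B_j e_k for k ≤ n−1), with spec(A_i) = spec(B_i) (as multisets, i.e. equal characteristic polynomials) for every i, and ⋂_{i=1}^p spec(A_i) = ∅. Then there exists U ∈ GL_n(ℂ) such that B_i = U·A_i·U⁻¹ for every i. -/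
/-!
Since the `A i` agree on the hyperplane `H` spanned by the first `n - 1` basis vectors, `n - 1`
linear conditions give a vector `v ≠ 0` with `A₀ ^ k v ∈ H` for `k ≤ n - 2`; then
`A i ^ k v = A₀ ^ k v` for all `i` and `k < n`. These Krylov vectors are independent: otherwise
their span stabilises early and is a nonzero `A₀`-invariant subspace of `H`, and an eigenvector of
`A₀` in it is an eigenvector of every `A i` with the same eigenvalue. In this common basis each
`A i` is, by Cayley–Hamilton, the companion matrix of its characteristic polynomial. The same holds
for the `B i`, and the two families are conjugate through the change of basis.
-/

open Module Submodule

variable {K V : Type*} [Field K] [AddCommGroup V] [Module K V]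

theorem linearIndependent_of_forall_notMem_span (u : ℕ → V) (m : ℕ)
    (h : ∀ j < m, u j ∉ span K (Set.range fun k : Fin j => u k)) :
    LinearIndependent K fun k : Fin m => u k := by
  induction m with
  | zero => exact linearIndependent_empty_type
  | succ m ih =>
    rw [linearIndependent_finSucc']
    exact ⟨ih fun j hj => h j (by omega), h m m.lt_succ_self⟩

namespace Module.End

theorem exists_hasEigenvector_mem_of_le_comap [IsAlgClosed K] [FiniteDimensional K V]
    {f : End K V} {S : Submodule K V} (hS : S ≠ ⊥) (hfS : S ≤ S.comap f) :
    ∃ μ, ∃ x ∈ S, f.HasEigenvector μ x := by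
  have : Nontrivial S := nontrivial_iff_ne_bot.mpr hS
  obtain ⟨μ, hμ⟩ := exists_eigenvalue (f.restrict hfS)
  obtain ⟨x, hx⟩ := hμ.exists_hasEigenvector
  refine ⟨μ, x, x.2, ?_, by simpa using hx.2⟩
  rw [mem_genEigenspace_one]
  exact congr_arg Subtype.val hx.apply_eq_smul

def krylovSubspace (f : End K V) (v : V) (j : ℕ) : Submodule K V :=
  span K (Set.range fun k : Fin j => (f ^ (k : ℕ)) v)

theorem pow_apply_mem_krylovSubspace {f : End K V} {v : V} {j k : ℕ} (hk : k < j) :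
    (f ^ k) v ∈ f.krylovSubspace v j :=
  subset_span ⟨⟨k, hk⟩, rfl⟩

theorem krylovSubspace_le_comap_of_pow_apply_mem {f : End K V} {v : V} {j : ℕ}
    (h : (f ^ j) v ∈ f.krylovSubspace v j) :
    f.krylovSubspace v j ≤ (f.krylovSubspace v j).comap f := by
  refine span_le.mpr ?_
  rintro _ ⟨k, rfl⟩
  rw [SetLike.mem_coe, mem_comap, ← mul_apply, ← pow_succ']
  rcases (show (k : ℕ) + 1 ≤ j from k.2).lt_or_eq with hk | hk
  · exact pow_apply_mem_krylovSubspace hk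
  · rwa [hk]

theorem krylovSubspace_le {f : End K V} {v : V} {j : ℕ} {S : Submodule K V}
    (h : ∀ k < j, (f ^ k) v ∈ S) : f.krylovSubspace v j ≤ S :=
  span_le.mpr <| by rintro _ ⟨k, rfl⟩; exact h k k.2

theorem linearIndependent_pow_apply_of_forall_eq_bot {f : End K V}
    {H : Submodule K V} (hH : ∀ S ≤ H, S ≤ S.comap f → S = ⊥) {v : V} (hv : v ≠ 0) {m : ℕ}
    (hvH : ∀ k, k + 1 < m → (f ^ k) v ∈ H) :
    LinearIndependent K fun k : Fin m => (f ^ (k : ℕ)) v := by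
  refine linearIndependent_of_forall_notMem_span (fun k => (f ^ k) v) m fun j hj hmem => hv ?_
  have hbot : f.krylovSubspace v j = ⊥ :=
    hH _ (krylovSubspace_le fun k hk => hvH k (by omega))
      (krylovSubspace_le_comap_of_pow_apply_mem hmem)
  have hv_mem : v ∈ f.krylovSubspace v j := by
    rcases j.eq_zero_or_pos with rfl | hj0
    · simpa [krylovSubspace] using hmem
    · simpa using pow_apply_mem_krylovSubspace (f := f) (v := v) hj0
  simpa [hbot] using hv_mem

theorem exists_ne_zero_forall_pow_apply_mem_ker [FiniteDimensional K V] [Nontrivial V]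
    (f : End K V) (φ : V →ₗ[K] K) {m : ℕ} (hm : m ≤ finrank K V) :
    ∃ v ≠ 0, ∀ k, k + 1 < m → (f ^ k) v ∈ LinearMap.ker φ := by
  let L : V →ₗ[K] Fin (m - 1) → K := LinearMap.pi fun k => φ ∘ₗ f ^ (k : ℕ)
  have hrank : finrank K (Fin (m - 1) → K) < finrank K V := by
    have := finrank_pos (R := K) (M := V)
    simp only [finrank_fin_fun]
    omega
  obtain ⟨v, hv, hv0⟩ := (Submodule.ne_bot_iff _).mp (LinearMap.ker_ne_bot_of_finrank_lt hrank)
  exact ⟨v, hv0, fun k hk => congr_fun (LinearMap.mem_ker.mp hv : L v = 0) ⟨k, by omega⟩⟩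

variable {ι : Type*}

theorem eq_bot_of_le_of_le_comap [IsAlgClosed K] [FiniteDimensional K V] {f : ι → End K V}
    {H : Submodule K V} (hf : ∀ i j, ∀ x ∈ H, f i x = f j x)
    (hspec : ¬∃ μ, ∀ i, (f i).HasEigenvalue μ) (i : ι) :
    ∀ S ≤ H, S ≤ S.comap (f i) → S = ⊥ := by
  intro S hSH hSf
  by_contra hS
  obtain ⟨μ, x, hxS, hx⟩ := exists_hasEigenvector_mem_of_le_comap hS hSf
  refine hspec ⟨μ, fun j => hasEigenvalue_of_hasEigenvector ⟨?_, hx.2⟩⟩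
  rw [mem_genEigenspace_one, hf j i x (hSH hxS)]
  exact hx.apply_eq_smul

theorem pow_apply_eq_of_forall_eq {f g : End K V} {H : Submodule K V}
    (hfg : ∀ x ∈ H, f x = g x) {v : V} {m : ℕ} (hv : ∀ k, k + 1 < m → (g ^ k) v ∈ H) :
    ∀ k < m, (f ^ k) v = (g ^ k) v := by
  intro k hk
  induction k with
  | zero => rfl
  | succ k ih =>
    rw [pow_succ', pow_succ', mul_apply, mul_apply, ih (by omega), hfg _ (hv k hk)]

theorem exists_linearIndependent_pow_apply [IsAlgClosed K] [FiniteDimensional K V]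
    [Nontrivial V] {f : ι → End K V} {φ : V →ₗ[K] K}
    (hf : ∀ i j, ∀ x ∈ LinearMap.ker φ, f i x = f j x)
    (hspec : ¬∃ μ, ∀ i, (f i).HasEigenvalue μ) (i₀ : ι) {m : ℕ} (hm : m ≤ finrank K V) :
    ∃ v, LinearIndependent K (fun k : Fin m => (f i₀ ^ (k : ℕ)) v) ∧
      ∀ i, ∀ k < m, (f i ^ k) v = (f i₀ ^ k) v := by
  obtain ⟨v, hv0, hvH⟩ := exists_ne_zero_forall_pow_apply_mem_ker (f i₀) φ hm
  exact ⟨v, linearIndependent_pow_apply_of_forall_eq_bot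
    (eq_bot_of_le_of_le_comap hf hspec i₀) hv0 hvH,
    fun i => pow_apply_eq_of_forall_eq (hf i i₀) hvH⟩

end Module.End

namespace Matrix

open Polynomial

variable {R : Type*} [CommRing R] {n : ℕ}

-- The matrix of multiplication by `X` on `R[X] ⧸ (q)` in the basis `1, X, …, X ^ (n - 1)`,
-- for `q` monic of degree `n`.
def companion (n : ℕ) (q : R[X]) : Matrix (Fin n) (Fin n) R :=
  of fun r k => if (k : ℕ) + 1 = n then -q.coeff r else if (r : ℕ) = k + 1 then 1 else 0

def krylov (A : Matrix (Fin n) (Fin n) R) (v : Fin n → R) : Matrix (Fin n) (Fin n) R :=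
  of fun r k => (A ^ (k : ℕ) *ᵥ v) r

theorem pow_eq_neg_sum_coeff_charpoly_smul_pow (A : Matrix (Fin n) (Fin n) R) :
    A ^ n = -∑ k : Fin n, A.charpoly.coeff k • A ^ (k : ℕ) := by
  nontriviality R
  have hCH := A.aeval_self_charpoly
  rw [A.charpoly_monic.as_sum, charpoly_natDegree_eq_dim, Fintype.card_fin] at hCH
  simp only [map_add, map_pow, aeval_X, map_sum, map_mul, aeval_C,
    Algebra.algebraMap_eq_smul_one, smul_mul_assoc, one_mul] at hCH
  rw [Fin.sum_univ_eq_sum_range (fun k => A.charpoly.coeff k • A ^ k)]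
  exact eq_neg_of_add_eq_zero_left hCH

theorem mul_krylov (A : Matrix (Fin n) (Fin n) R) (v : Fin n → R) :
    A * krylov A v = krylov A v * companion n A.charpoly := by
  ext r k
  have hlhs : (A * krylov A v) r k = (A ^ ((k : ℕ) + 1) *ᵥ v) r := by
    rw [pow_succ', ← mulVec_mulVec]; rfl
  rw [hlhs, mul_apply]
  simp only [krylov, companion, of_apply]
  split_ifs with hk
  · rw [hk, pow_eq_neg_sum_coeff_charpoly_smul_pow, neg_mulVec, sum_mulVec]
    simp [Finset.sum_apply, smul_mulVec, mul_comm]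
  · rw [Finset.sum_eq_single ⟨k + 1, by omega⟩]
    · simp
    · intro s _ hs
      simp [Fin.ext_iff.not.mp hs]
    · simp

theorem mulVec_eq_mulVec_of_apply_eq {l m : Type*} [Fintype m] {A B : Matrix l m R} {ℓ : m}
    (h : ∀ k ≠ ℓ, ∀ r, A r k = B r k) {x : m → R} (hx : x ℓ = 0) : A *ᵥ x = B *ᵥ x := by
  ext r
  refine Finset.sum_congr rfl fun k _ => ?_
  by_cases hk : k = ℓ
  · simp [hk, hx]
  · simp [h k hk r]

theorem exists_isUnit_mul_eq_mul_companion {K ι : Type*} [Field K] [IsAlgClosed K] [NeZero n]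
    (A : ι → Matrix (Fin n) (Fin n) K)
    (hcols : ∀ i j, ∀ k : Fin n, (k : ℕ) < n - 1 → ∀ r, A i r k = A j r k)
    (hspec : ¬∃ μ, ∀ i, μ ∈ spectrum K (A i)) :
    ∃ P, IsUnit P ∧ ∀ i, A i * P = P * companion n (A i).charpoly := by
  obtain ⟨i₀⟩ : Nonempty ι := by
    by_contra h
    exact hspec ⟨0, fun i => (not_nonempty_iff.mp h).elim i⟩
  let ℓ : Fin n := ⟨n - 1, by have := NeZero.pos n; omega⟩
  have hf : ∀ i j, ∀ x ∈ LinearMap.ker (LinearMap.proj ℓ : (Fin n → K) →ₗ[K] K),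
      toLin' (A i) x = toLin' (A j) x := by
    refine fun i j x hx => mulVec_eq_mulVec_of_apply_eq (fun k hk => hcols i j k ?_) hx
    have : (k : ℕ) ≠ n - 1 := fun h => hk (Fin.ext h)
    omega
  have heig : ¬∃ μ, ∀ i, Module.End.HasEigenvalue (toLin' (A i)) μ := by
    simpa only [Module.End.hasEigenvalue_iff_mem_spectrum, spectrum_toLin'] using hspec
  obtain ⟨v, hli, hpow⟩ := Module.End.exists_linearIndependent_pow_apply hf heig i₀
    (m := n) (by simp)
  have hkrylov : ∀ i, krylov (A i) v = krylov (A i₀) v := fun i => by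
    ext r k
    exact congr_fun (by simpa only [← toLin'_pow, toLin'_apply] using hpow i k k.2) r
  refine ⟨krylov (A i₀) v, ?_, fun i => ?_⟩
  · rw [← linearIndependent_cols_iff_isUnit]
    simp only [← toLin'_pow, toLin'_apply] at hli
    exact hli
  · rw [← hkrylov i]
    exact mul_krylov _ _

theorem eq_mul_mul_inv_of_mul_eq_mul {m S : Type*} [Fintype m] [DecidableEq m] [CommRing S]
    {A B C P W : Matrix m m S} (hP : IsUnit P) (hW : IsUnit W) (hA : A * P = P * C)
    (hB : B * W = W * C) : B = W * P⁻¹ * A * (W * P⁻¹)⁻¹ := by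
  have hPd := (isUnit_iff_isUnit_det P).mp hP
  have hWd := (isUnit_iff_isUnit_det W).mp hW
  rw [mul_inv_rev, nonsing_inv_nonsing_inv P hPd]
  calc B = W * C * W⁻¹ := by rw [← hB, mul_nonsing_inv_cancel_right _ _ hWd]
    _ = W * (P⁻¹ * A * P) * W⁻¹ := by
      rw [mul_assoc P⁻¹, hA, ← mul_assoc P⁻¹, nonsing_inv_mul _ hPd, one_mul]
    _ = W * P⁻¹ * A * (P * W⁻¹) := by simp only [mul_assoc]

end Matrix

open Matrix

theorem stmt_15_general (n p : ℕ) (hn : 2 ≤ n)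
    (A B : Fin p → Matrix (Fin n) (Fin n) ℂ)
    (hAcols : ∀ i j : Fin p, ∀ k : Fin n, (k : ℕ) < n - 1 → ∀ r : Fin n, A i r k = A j r k)
    (hBcols : ∀ i j : Fin p, ∀ k : Fin n, (k : ℕ) < n - 1 → ∀ r : Fin n, B i r k = B j r k)
    (hchar : ∀ i, (A i).charpoly = (B i).charpoly)
    (hspec : ¬ ∃ μ : ℂ, ∀ i, μ ∈ spectrum ℂ (A i)) :
    ∃ U : Matrix (Fin n) (Fin n) ℂ, IsUnit U ∧ ∀ i, B i = U * A i * U⁻¹ := by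
  have : NeZero n := ⟨by omega⟩
  have hspecB : ¬∃ μ : ℂ, ∀ i, μ ∈ spectrum ℂ (B i) := by
    simpa only [mem_spectrum_iff_isRoot_charpoly, hchar] using hspec
  obtain ⟨P, hP, hAP⟩ := exists_isUnit_mul_eq_mul_companion A hAcols hspec
  obtain ⟨W, hW, hBW⟩ := exists_isUnit_mul_eq_mul_companion B hBcols hspecB
  refine ⟨W * P⁻¹, hW.mul (isUnit_nonsing_inv_iff.mpr hP), fun i => ?_⟩
  exact eq_mul_mul_inv_of_mul_eq_mul hP hW (hAP i) (hchar i ▸ hBW i)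

theorem stmt_15 (n p : ℕ) (hn : 2 ≤ n) (hp : 2 ≤ p)
    (A B : Fin p → Matrix (Fin n) (Fin n) ℂ)
    (hA : ∀ i, IsUnit (A i)) (hB : ∀ i, IsUnit (B i))
    (hAcols : ∀ i j : Fin p, ∀ k : Fin n, (k : ℕ) < n - 1 → ∀ r : Fin n, A i r k = A j r k)
    (hBcols : ∀ i j : Fin p, ∀ k : Fin n, (k : ℕ) < n - 1 → ∀ r : Fin n, B i r k = B j r k)
    (hchar : ∀ i, (A i).charpoly = (B i).charpoly)
    (hspec : ¬ ∃ μ : ℂ, ∀ i, μ ∈ spectrum ℂ (A i)) :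
    ∃ U : Matrix (Fin n) (Fin n) ℂ, IsUnit U ∧ ∀ i, B i = U * A i * U⁻¹ :=
  stmt_15_general n p hn A B hAcols hBcols hchar hspec
end
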